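/- arXiv:2404.03867 — 2 statements merged into one kernel-verified Lean document; each statement's English description precedes it below -/
import Mathlib

section
/- Assume R > M², ℓ = M, M² < L ≤ R, and π_min < 1. Define the drift function V(x) = exp(log π(x)/log π_min). Then for every x ∈ X with x ≠ x*, (P_h V)(x) ≤ α·V(x), where (P_h V)(x) = Σ_{x'∈X} P_h(x,x')·V(x') and α = 1 + log(L/M)/(4·log π_min) + (e − 1)·M²/L (note log π_min < 0, so the middle term is negative). -/
open Finset

noncomputable section

variable {X : Type*}

/-- Total variation distance between two (finitely supported) distributions. -/
def tvDist [Fintype X] (ζ μ : X → ℝ) : ℝ :=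
  ⨆ A : Finset X, |∑ a ∈ A, ζ a - ∑ a ∈ A, μ a|

/-- The lazy version `(P + I)/2` of a transition matrix. -/
def lazyM [Fintype X] [DecidableEq X] (P : Matrix X X ℝ) : Matrix X X ℝ :=
  (2 : ℝ)⁻¹ • (P + 1)

/-- Mixing time started from `x`. -/
def mixTimeFrom [Fintype X] [DecidableEq X] (P : Matrix X X ℝ) (μ : X → ℝ) (ε : ℝ) (x : X) : ℕ :=
  sInf {t : ℕ | tvDist (fun y => (P ^ t) x y) μ ≤ ε}

/-- Worst-case mixing time. -/
def mixTime [Fintype X] [DecidableEq X] (P : Matrix X X ℝ) (μ : X → ℝ) (ε : ℝ) : ℕ :=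
  Finset.univ.sup (mixTimeFrom P μ ε)

/-- Variational spectral gap of a reversible transition matrix. -/
def specGap [Fintype X] (P : Matrix X X ℝ) (μ : X → ℝ) : ℝ :=
  sInf { r : ℝ | ∃ f : X → ℝ,
    (2⁻¹ * ∑ x, ∑ y, (f x - f y) ^ 2 * μ x * μ y) ≠ 0 ∧
    r = (2⁻¹ * ∑ x, ∑ y, (f x - f y) ^ 2 * P x y * μ x) /
        (2⁻¹ * ∑ x, ∑ y, (f x - f y) ^ 2 * μ x * μ y) }

/-- Restricted spectral gap on `X0`. -/
def restGap [Fintype X] (P : Matrix X X ℝ) (μ : X → ℝ) (X0 : Finset X) : ℝ :=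
  sInf { r : ℝ | ∃ f : X → ℝ,
    0 < (∑ x ∈ X0, ∑ y ∈ X0, (f x - f y) ^ 2 * μ x * μ y) ∧
    r = (∑ x ∈ X0, ∑ y ∈ X0, (f x - f y) ^ 2 * P x y * μ x) /
        (∑ x ∈ X0, ∑ y ∈ X0, (f x - f y) ^ 2 * μ x * μ y) }

/-- `c(ρ) = 4 / (1 - ρ^{-1/2})³`. -/
def cFun (ρ : ℝ) : ℝ := 4 / (1 - ρ ^ (-(2 : ℝ)⁻¹)) ^ 3

/-- Maximum neighborhood size. -/
def Mmax [Fintype X] (N : X → Finset X) : ℕ := Finset.univ.sup fun x => (N x).card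

/-- Minimal value of `π`. -/
def piMin [Fintype X] [Nonempty X] (π : X → ℝ) : ℝ := ⨅ x, π x

/-- `R = min_{x ≠ x*} max_{y ∈ N(x)} π(y)/π(x)`. -/
def Rval [Fintype X] (π : X → ℝ) (N : X → Finset X) (xstar : X) : ℝ :=
  sInf ((fun x => sSup ((fun y => π y / π x) '' (N x : Set X))) '' {x | x ≠ xstar})

/-- Restricted `R|_{X₀}`. -/
def RvalRes [Fintype X] [DecidableEq X] (π : X → ℝ) (N : X → Finset X) (X0 : Finset X)
    (x0star : X) : ℝ :=
  sInf ((fun x => sSup ((fun y => π y / π x) '' ((N x ∩ X0 : Finset X) : Set X))) ''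
    {x | x ∈ X0 ∧ x ≠ x0star})

/-- Random walk Metropolis–Hastings transition matrix. -/
def rwMH [Fintype X] [DecidableEq X] (π : X → ℝ) (N : X → Finset X) : Matrix X X ℝ :=
  Matrix.of fun x y =>
    if y ∈ N x then min (((N x).card : ℝ))⁻¹ (π y / (π x * ((N y).card : ℝ)))
    else if y = x then
      1 - ∑ z ∈ N x, min (((N x).card : ℝ))⁻¹ (π z / (π x * ((N z).card : ℝ)))
    else 0

/-- The clipping function `clip(u, ℓ, L)`. -/
def clip (l L u : ℝ) : ℝ := if u < l then l else if u ≤ L then u else L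

/-- Normalizing constant of the informed proposal. -/
def Zh [Fintype X] (π : X → ℝ) (N : X → Finset X) (l L : ℝ) (x : X) : ℝ :=
  ∑ y ∈ N x, clip l L (π y / π x)

/-- Informed proposal kernel. -/
def Kh [Fintype X] [DecidableEq X] (π : X → ℝ) (N : X → Finset X) (l L : ℝ) (x y : X) : ℝ :=
  (if y ∈ N x then clip l L (π y / π x) else 0) / Zh π N l L x

/-- Informed Metropolis–Hastings transition matrix. -/
def infMH [Fintype X] [DecidableEq X] (π : X → ℝ) (N : X → Finset X) (l L : ℝ) :
    Matrix X X ℝ :=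
  Matrix.of fun x y =>
    if y = x then
      1 - ∑ z ∈ Finset.univ.erase x,
        Kh π N l L x z * min 1 ((π z * Kh π N l L z x) / (π x * Kh π N l L x z))
    else Kh π N l L x y * min 1 ((π y * Kh π N l L y x) / (π x * Kh π N l L x y))

/-- List of consecutive edges of a list of vertices. -/
def edgeList : List X → List (X × X)
  | a :: b :: rest => (a, b) :: edgeList (b :: rest)
  | _ => []

/-- `γ` is a path from `x` to `y` (x ≠ y) with all edges in `E` and no repeated edge. -/
def IsPathIn (E : Finset (X × X)) (x y : X) (γ : List X) : Prop :=
  x ≠ y ∧ γ.head? = some x ∧ γ.getLast? = some y ∧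
    (∀ e ∈ edgeList γ, e ∈ E) ∧ (edgeList γ).Nodup

/-- `Φ(x,y) = Σ_{γ ∈ Γ_E(x,y)} φ(γ)`. -/
def flowBetween (E : Finset (X × X)) (φ : List X → ℝ) (x y : X) : ℝ :=
  ∑' γ : {γ : List X // IsPathIn E x y γ}, φ γ

/-- Flow from `x` to `y` through the edge `e`. -/
def flowBetweenThrough (E : Finset (X × X)) (φ : List X → ℝ) (x y : X) (e : X × X) : ℝ :=
  ∑' γ : {γ : List X // IsPathIn E x y γ ∧ e ∈ edgeList γ}, φ γ

/-- `w`-length of a path. -/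
def wlen (w : X × X → ℝ) (γ : List X) : ℝ := ((edgeList γ).map w).sum

/-- Congestion `A(E, w, φ)`. -/
def congestion [Fintype X] (π : X → ℝ) (P : Matrix X X ℝ) (E : Finset (X × X))
    (w : X × X → ℝ) (φ : List X → ℝ) : ℝ :=
  ⨆ e ∈ E,
    (∑' γ : {γ : List X // (∃ x y, IsPathIn E x y γ) ∧ e ∈ edgeList γ}, wlen w γ * φ γ) /
      (π e.1 * P e.1 e.2 * w e)

/-- `N_S(x) = {x' ∈ N(x) : π(x')/π(x) ≥ S}`. -/
def NS [Fintype X] (π : X → ℝ) (N : X → Finset X) (S : ℝ) (x : X) : Finset X :=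
  (N x).filter fun y => S ≤ π y / π x

/-- Edge set `E_S`. -/
def ES [Fintype X] [DecidableEq X] (π : X → ℝ) (N : X → Finset X) (S : ℝ) : Finset (X × X) :=
  Finset.univ.filter fun e => e.1 ∈ NS π N S e.2 ∨ e.2 ∈ NS π N S e.1

/-- Restricted `N|^S_{X₀}(x)`. -/
def NSres [Fintype X] [DecidableEq X] (π : X → ℝ) (N : X → Finset X) (X0 : Finset X) (S : ℝ)
    (x : X) : Finset X :=
  ((N x) ∩ X0).filter fun y => S ≤ π y / π x

/-- Restricted edge set `E_S⁰`. -/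
def ESres [Fintype X] [DecidableEq X] (π : X → ℝ) (N : X → Finset X) (X0 : Finset X)
    (S : ℝ) : Finset (X × X) :=
  Finset.univ.filter fun e =>
    (e.1 ∈ X0 ∧ e.2 ∈ X0) ∧ (e.1 ∈ NSres π N X0 S e.2 ∨ e.2 ∈ NSres π N X0 S e.1)

end

/-!
Write `(P_h V)(x) = V(x) + ∑_{y ∈ N(x)} P_h(x, y) (V(y) - V(x))` and sort the neighbours by
`u = π(y) / π(x)`. Moves with `u ≥ M` are always accepted (since `Z_h(x) ≥ L` for `x ≠ x*` and
`Z_h(y) ≤ M L`) and multiply `V` by `exp (log u / log π_min) ≤ 1 + log u / (2 log π_min)`; the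
neighbour with `u ≥ L ≥ M²`, which every `x ≠ x*` has, makes `∑ h(u) log u` over these moves at
least `log (L / M) / 2 · Z_h(x)`, giving the negative term. Moves with `1 ≤ u < M` do not increase
`V`, and each of the at most `M` moves with `u < 1` has probability at most `M / L` and raises `V`
by at most `e - 1`.
-/

section Clip

variable {l L u : ℝ}

lemma clip_of_lt (h : u < l) : clip l L u = l := if_pos h

lemma clip_of_mem_Icc (hl : l ≤ u) (hL : u ≤ L) : clip l L u = u := by
  rw [clip, if_neg hl.not_gt, if_pos hL]

lemma clip_of_le (hlL : l ≤ L) (h : L ≤ u) : clip l L u = L := by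
  unfold clip; split_ifs <;> linarith

lemma le_clip (hlL : l ≤ L) : l ≤ clip l L u := by
  unfold clip; split_ifs <;> linarith

lemma clip_le (hlL : l ≤ L) : clip l L u ≤ L := by
  unfold clip; split_ifs <;> linarith

lemma clip_le_self (h : l ≤ u) : clip l L u ≤ u := by
  unfold clip; split_ifs <;> linarith

lemma mul_clip_inv_le (hl : 1 ≤ l) (hu : 0 < u) (hu1 : u ≤ 1) : u * clip l L u⁻¹ ≤ l := by
  have hinv : u * u⁻¹ = 1 := mul_inv_cancel₀ hu.ne'
  unfold clip
  split_ifs with h₁ h₂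
  · nlinarith
  · linarith
  · nlinarith

end Clip

section RealInequalities

open Real

lemma exp_le_one_add_half {s : ℝ} (h₁ : -1 ≤ s) (h₂ : s ≤ 0) : exp s ≤ 1 + s / 2 := by
  have hconv := convexOn_exp.2 (Set.mem_univ (-1)) (Set.mem_univ 0) (neg_nonneg.2 h₂)
    (by linarith : (0 : ℝ) ≤ 1 + s) (by ring)
  simp only [smul_eq_mul, mul_zero, add_zero, exp_zero, mul_one, neg_mul_neg] at hconv
  nlinarith [exp_neg_one_lt_half]

lemma neg_exp_sub_one_le_mul_log_sub {u : ℝ} (hu : 0 < u) (c : ℝ) :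
    -exp (c - 1) ≤ u * (log u - c) := by
  have h := log_le_sub_one_of_pos (div_pos (exp_pos (c - 1)) hu)
  rw [log_div (exp_pos _).ne' hu.ne', log_exp] at h
  have : c - log u ≤ exp (c - 1) / u := by linarith
  rw [le_div_iff₀ hu] at this
  linarith

lemma neg_le_clip_mul_ite_log_sub {M L u c : ℝ} (hM : 1 ≤ M) (hML : M ≤ L) (hc : 0 ≤ c)
    (hexpc : M * exp c ≤ L) :
    -(exp c + c * M) ≤ clip M L u * ((if M ≤ u then log u else 0) - c) := by
  have hcM : 0 ≤ c * M := mul_nonneg hc (by linarith)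
  split_ifs with hMu
  · have hu : 0 < u := by linarith
    rcases le_or_gt c (log u) with hcu | hcu
    · have := mul_nonneg ((zero_le_one.trans hM).trans (le_clip (u := u) hML)) (sub_nonneg.2 hcu)
      linarith [exp_pos c]
    · have huL : u ≤ L := by
        have : u < exp c := by simpa [exp_log hu] using exp_lt_exp.2 hcu
        nlinarith [exp_pos c]
      rw [clip_of_mem_Icc hMu huL]
      linarith [neg_exp_sub_one_le_mul_log_sub hu c, exp_le_exp.2 (by linarith : c - 1 ≤ c)]
  · rw [clip_of_lt (not_le.1 hMu)]
    nlinarith [exp_pos c]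

theorem half_log_div_mul_sum_clip_le {ι : Type*} (s : Finset ι) (u : ι → ℝ) {M L : ℝ}
    (hs : (s.card : ℝ) ≤ M) (hML : M ^ 2 ≤ L) {i₀ : ι} (hi₀ : i₀ ∈ s) (hLu : L ≤ u i₀) :
    log (L / M) / 2 * ∑ i ∈ s, clip M L (u i) ≤
      ∑ i ∈ s with M ≤ u i, clip M L (u i) * log (u i) := by
  classical
  set c := log (L / M) / 2
  have hM : 1 ≤ M := le_trans (by exact_mod_cast Finset.card_pos.2 ⟨i₀, hi₀⟩) hs
  have hML' : M ≤ L := by nlinarith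
  have hc : 0 ≤ c := div_nonneg (log_nonneg ((one_le_div (by linarith)).2 hML')) zero_le_two
  have hlogL : log L = 2 * c + log M := by
    rw [show 2 * c = log (L / M) by ring, log_div (by linarith) (by linarith)]; ring
  -- `exp c = √(L / M) ≤ L / M`
  have hexpc : M * exp c ≤ L := by
    have : exp c ≤ exp (2 * c) := exp_le_exp.2 (by linarith)
    rw [show 2 * c = log (L / M) by ring, exp_log (div_pos (by linarith) (by linarith))] at this
    rwa [le_div_iff₀ (by linarith), mul_comm] at this
  set t : ι → ℝ := fun i => clip M L (u i) * ((if M ≤ u i then log (u i) else 0) - c)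
  have hdiff : ∑ i ∈ s with M ≤ u i, clip M L (u i) * log (u i) - c * ∑ i ∈ s, clip M L (u i) =
      ∑ i ∈ s, t i := by
    rw [Finset.sum_filter, Finset.mul_sum, ← Finset.sum_sub_distrib]
    refine Finset.sum_congr rfl fun i _ => ?_
    simp only [t]
    split_ifs <;> ring
  have ht : ∀ i ∈ s.erase i₀, -(exp c + c * M) ≤ t i := fun i _ =>
    neg_le_clip_mul_ite_log_sub hM hML' hc hexpc
  have ht₀ : L * (c + log M) ≤ t i₀ := by
    simp only [t, if_pos (hML'.trans hLu), clip_of_le hML' hLu]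
    have := log_le_log (by linarith) hLu
    nlinarith
  -- The term of `i₀` pays for the at most `M - 1` others.
  have hsum : L * (c + log M) - (M - 1) * (exp c + c * M) ≤ ∑ i ∈ s, t i := by
    rw [← Finset.add_sum_erase s t hi₀]
    have hcard : ((s.erase i₀).card : ℝ) ≤ M - 1 := by
      rw [Finset.card_erase_of_mem hi₀, Nat.cast_pred (Finset.card_pos.2 ⟨i₀, hi₀⟩)]; linarith
    have := Finset.card_nsmul_le_sum _ _ _ ht
    rw [nsmul_eq_mul] at this
    nlinarith [exp_pos c, mul_nonneg hc (by linarith : 0 ≤ M)]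
  have hbound : (M - 1) * (exp c + c * M) ≤ L * (c + log M) := by
    have h₁ : (M - 1) * exp c ≤ L * log M := by
      nlinarith [exp_pos c, log_nonneg hM, self_sub_one_le_mul_log (by linarith : 0 ≤ M)]
    have h₂ : (M - 1) * (c * M) ≤ L * c := by nlinarith
    linarith
  linarith

end RealInequalities

section InformedMH

variable {X : Type*} [Fintype X] {π : X → ℝ} {N : X → Finset X} {l L : ℝ} {x y : X}

lemma clip_le_Zh (hl : 0 ≤ l) (hlL : l ≤ L) (hy : y ∈ N x) :
    clip l L (π y / π x) ≤ Zh π N l L x :=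
  Finset.single_le_sum (f := fun z => clip l L (π z / π x))
    (fun _ _ => hl.trans (le_clip hlL)) hy

lemma Zh_nonneg (hl : 0 ≤ l) (hlL : l ≤ L) (x : X) : 0 ≤ Zh π N l L x :=
  Finset.sum_nonneg fun _ _ => hl.trans (le_clip hlL)

lemma Zh_le (hlL : l ≤ L) (x : X) : Zh π N l L x ≤ (N x).card * L := by
  calc Zh π N l L x ≤ (N x).card • L := Finset.sum_le_card_nsmul _ _ _ fun _ _ => clip_le hlL
    _ = (N x).card * L := nsmul_eq_mul _ _

variable [DecidableEq X]

lemma Kh_of_mem (hy : y ∈ N x) : Kh π N l L x y = clip l L (π y / π x) / Zh π N l L x := by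
  rw [Kh, if_pos hy]

lemma Kh_of_notMem (hy : y ∉ N x) : Kh π N l L x y = 0 := by
  rw [Kh, if_neg hy, zero_div]

lemma Kh_nonneg (hl : 0 ≤ l) (hlL : l ≤ L) (x y : X) : 0 ≤ Kh π N l L x y := by
  by_cases hy : y ∈ N x
  · rw [Kh_of_mem hy]
    exact div_nonneg (hl.trans (le_clip hlL)) (Zh_nonneg hl hlL x)
  · rw [Kh_of_notMem hy]

lemma infMH_of_ne (hxy : y ≠ x) : infMH π N l L x y =
    Kh π N l L x y * min 1 (π y * Kh π N l L y x / (π x * Kh π N l L x y)) := by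
  simp [infMH, hxy]

lemma infMH_of_notMem (hxy : y ≠ x) (hy : y ∉ N x) : infMH π N l L x y = 0 := by
  rw [infMH_of_ne hxy, Kh_of_notMem hy, zero_mul]

lemma sum_infMH (x : X) : ∑ y, infMH π N l L x y = 1 := by
  rw [← Finset.add_sum_erase _ _ (Finset.mem_univ x)]
  have : ∀ y ∈ Finset.univ.erase x, infMH π N l L x y =
      Kh π N l L x y * min 1 (π y * Kh π N l L y x / (π x * Kh π N l L x y)) :=
    fun y hy => infMH_of_ne (Finset.ne_of_mem_erase hy)
  rw [Finset.sum_congr rfl this]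
  simp [infMH]

lemma sum_infMH_mul (f : X → ℝ) (x : X) :
    ∑ y, infMH π N l L x y * f y = f x + ∑ y ∈ N x, infMH π N l L x y * (f y - f x) := by
  have hsub : ∑ y ∈ N x, infMH π N l L x y * (f y - f x) =
      ∑ y, infMH π N l L x y * (f y - f x) := by
    refine Finset.sum_subset (Finset.subset_univ _) fun y _ hy => ?_
    by_cases hxy : y = x
    · rw [hxy, sub_self, mul_zero]
    · rw [infMH_of_notMem hxy hy, zero_mul]
  rw [hsub]
  simp only [mul_sub, Finset.sum_sub_distrib, ← Finset.sum_mul, sum_infMH, one_mul]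
  ring

lemma infMH_nonneg (hl : 0 ≤ l) (hlL : l ≤ L) (hπ : ∀ z, 0 ≤ π z) (hxy : y ≠ x) :
    0 ≤ infMH π N l L x y := by
  have hK := Kh_nonneg (π := π) (N := N) hl hlL
  rw [infMH_of_ne hxy]
  exact mul_nonneg (hK x y)
    (le_min zero_le_one (div_nonneg (mul_nonneg (hπ y) (hK y x)) (mul_nonneg (hπ x) (hK x y))))

lemma infMH_le_div (hl : 0 ≤ l) (hlL : l ≤ L) (hπx : 0 < π x) (hπy : 0 ≤ π y) (hxy : y ≠ x) :
    infMH π N l L x y ≤ π y * Kh π N l L y x / π x := by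
  have hK := Kh_nonneg (π := π) (N := N) hl hlL
  rw [infMH_of_ne hxy]
  rcases (hK x y).eq_or_lt with h | h
  · rw [← h, zero_mul]
    exact div_nonneg (mul_nonneg hπy (hK y x)) hπx.le
  · calc Kh π N l L x y * min 1 (π y * Kh π N l L y x / (π x * Kh π N l L x y))
        ≤ Kh π N l L x y * (π y * Kh π N l L y x / (π x * Kh π N l L x y)) :=
          mul_le_mul_of_nonneg_left (min_le_right _ _) h.le
      _ = π y * Kh π N l L y x / π x := by field_simp

lemma infMH_eq_Kh (hxy : y ≠ x) (hpos : 0 < π x * Kh π N l L x y)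
    (h : π x * Kh π N l L x y ≤ π y * Kh π N l L y x) : infMH π N l L x y = Kh π N l L x y := by
  rw [infMH_of_ne hxy, min_eq_left ((one_le_div hpos).2 h), mul_one]

lemma infMH_eq_of_le_div (hl : 0 < l) (hlL : l ≤ L) (hπx : 0 < π x) (hy : y ∈ N x)
    (hx : x ∈ N y) (hxy : y ≠ x) (hlu : l ≤ π y / π x) (hZx : L ≤ Zh π N l L x)
    (hZy : Zh π N l L y ≤ l * L) :
    infMH π N l L x y = clip l L (π y / π x) / Zh π N l L x := by
  have hL : 0 < L := hl.trans_le hlL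
  have hZxpos : 0 < Zh π N l L x := hL.trans_le hZx
  have hπy : 0 < π y := by
    have := hl.trans_le hlu
    rwa [div_pos_iff_of_pos_right hπx] at this
  rw [← Kh_of_mem hy]
  refine infMH_eq_Kh hxy (mul_pos hπx ?_) ?_
  · rw [Kh_of_mem hy]
    exact div_pos (hl.trans_le (le_clip hlL)) hZxpos
  calc π x * Kh π N l L x y ≤ π x * (π y / π x) / Zh π N l L x := by
        rw [Kh_of_mem hy, mul_div_assoc]
        exact mul_le_mul_of_nonneg_left
          (div_le_div_of_nonneg_right (clip_le_self hlu) hZxpos.le) hπx.le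
    _ ≤ π y / L := by
        rw [mul_div_cancel₀ _ hπx.ne']
        exact div_le_div_of_nonneg_left hπy.le hL hZx
    _ = π y * (l / (l * L)) := by field_simp
    _ ≤ π y * Kh π N l L y x := by
        rw [Kh_of_mem hx]
        have hZypos : 0 < Zh π N l L y :=
          hl.trans_le ((le_clip hlL).trans (clip_le_Zh hl.le hlL hx))
        exact mul_le_mul_of_nonneg_left (div_le_div₀ (hl.le.trans (le_clip hlL)) (le_clip hlL)
          hZypos hZy) hπy.le

lemma infMH_le_div_of_le (hl : 1 ≤ l) (hlL : l ≤ L) (hπx : 0 < π x) (hπy : 0 < π y)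
    (hx : x ∈ N y) (hxy : y ≠ x) (hle : π y ≤ π x) (hZy : L ≤ Zh π N l L y) :
    infMH π N l L x y ≤ l / L := by
  have hr : π x / π y = (π y / π x)⁻¹ := (inv_div _ _).symm
  calc infMH π N l L x y ≤ π y * Kh π N l L y x / π x :=
        infMH_le_div (by linarith) hlL hπx hπy.le hxy
    _ = π y / π x * clip l L (π y / π x)⁻¹ / Zh π N l L y := by
        rw [Kh_of_mem hx, hr]; ring
    _ ≤ l / L :=
        div_le_div₀ (by linarith) (mul_clip_inv_le hl (div_pos hπy hπx)
          ((div_le_one hπx).2 hle)) (by linarith) hZy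

end InformedMH

section GreatNeighbor

variable {X : Type*} [Fintype X] {π : X → ℝ} {N : X → Finset X} {L : ℝ} {xstar z : X}

lemma exists_le_div_of_le_Rval (hL : 0 < L) (hLR : L ≤ Rval π N xstar) (hz : z ≠ xstar) :
    ∃ y ∈ N z, L ≤ π y / π z := by
  set T := (fun y => π y / π z) '' (N z : Set X)
  have hR : Rval π N xstar ≤ sSup T := csInf_le (Set.toFinite _).bddBelow ⟨z, hz, rfl⟩
  rcases (N z).eq_empty_or_nonempty with h | ⟨y, hy⟩
  · simp only [T, h, Finset.coe_empty, Set.image_empty, Real.sSup_empty] at hR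
    linarith
  · obtain ⟨y', hy', hy'T⟩ :=
      Set.Nonempty.csSup_mem (⟨_, y, hy, rfl⟩ : T.Nonempty) (Set.toFinite T)
    exact ⟨y', hy', hLR.trans (hR.trans_eq hy'T.symm)⟩

lemma le_Zh_of_le_div {l : ℝ} {y : X} (hl : 0 ≤ l) (hlL : l ≤ L) (hy : y ∈ N z)
    (h : L ≤ π y / π z) : L ≤ Zh π N l L z := by
  have := clip_le_Zh (π := π) hl hlL hy
  rwa [clip_of_le hlL h] at this

end GreatNeighbor

noncomputable def driftFn (m p : ℝ) : ℝ := Real.exp (Real.log p / Real.log m)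

section DriftFn

open Real

variable {m p q : ℝ}

lemma one_le_driftFn (hm0 : 0 < m) (hm1 : m < 1) (hp0 : 0 ≤ p) (hp1 : p ≤ 1) :
    1 ≤ driftFn m p :=
  one_le_exp (div_nonneg_of_nonpos (log_nonpos hp0 hp1) (log_neg hm0 hm1).le)

lemma driftFn_le_exp_one (hm0 : 0 < m) (hm1 : m < 1) (hmp : m ≤ p) : driftFn m p ≤ exp 1 :=
  exp_le_exp.2 ((div_le_one_of_neg (log_neg hm0 hm1)).2 (log_le_log hm0 hmp))

lemma driftFn_anti (hm0 : 0 < m) (hm1 : m < 1) (hp : 0 < p) (hpq : p ≤ q) :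
    driftFn m q ≤ driftFn m p :=
  exp_le_exp.2 ((div_le_div_right_of_neg (log_neg hm0 hm1)).2 (log_le_log hp hpq))

lemma driftFn_sub_le (hm0 : 0 < m) (hm1 : m < 1) (hmp : m ≤ p) (hpq : p ≤ q) (hq : q ≤ 1) :
    driftFn m q - driftFn m p ≤ driftFn m p * (log (q / p) / (2 * log m)) := by
  have hlm := log_neg hm0 hm1
  have hp : 0 < p := hm0.trans_le hmp
  set s := log (q / p) / log m
  have hlog : log (q / p) = log q - log p := log_div (hp.trans_le hpq).ne' hp.ne'
  have hs : driftFn m q = driftFn m p * exp s := by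
    rw [driftFn, driftFn, ← exp_add]
    congr 1
    simp only [s, hlog]
    ring
  have hs₀ : s ≤ 0 :=
    div_nonpos_of_nonneg_of_nonpos (log_nonneg ((one_le_div hp).2 hpq)) hlm.le
  have hs₁ : -1 ≤ s := by
    rw [le_div_iff_of_neg hlm, hlog]
    linarith [log_nonpos (hp.le.trans hpq) hq, log_le_log hm0 hmp]
  rw [hs, show log (q / p) / (2 * log m) = s / 2 by ring]
  nlinarith [exp_le_one_add_half hs₁ hs₀, one_le_driftFn hm0 hm1 hp.le (hpq.trans hq)]

end DriftFn

section Drift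

variable {X : Type*} [Fintype X] [DecidableEq X] {π : X → ℝ} {N : X → Finset X} {M L m : ℝ}
  {x xstar : X}

lemma sum_sdiff_NS_one_le (hM : 1 ≤ M) (hML : M ≤ L) (hπ : ∀ z, 0 < π z) (hm0 : 0 < m)
    (hm1 : m < 1) (hπm : ∀ z, m ≤ π z) (hπ1 : ∀ z, π z ≤ 1) (hNirr : x ∉ N x)
    (hNsym : ∀ y ∈ N x, x ∈ N y) (hcard : ((N x).card : ℝ) ≤ M)
    (hxstar : ∀ z, π z ≤ π xstar) (hZ : ∀ z, z ≠ xstar → L ≤ Zh π N M L z) :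
    ∑ y ∈ N x \ NS π N 1 x, infMH π N M L x y * (driftFn m (π y) - driftFn m (π x)) ≤
      (Real.exp 1 - 1) * M ^ 2 / L := by
  have he : 0 ≤ Real.exp 1 - 1 := by linarith [Real.add_one_le_exp 1]
  have hterm : ∀ y ∈ N x \ NS π N 1 x,
      infMH π N M L x y * (driftFn m (π y) - driftFn m (π x)) ≤ M / L * (Real.exp 1 - 1) := by
    intro y hy
    obtain ⟨hyN, hyNS⟩ := Finset.mem_sdiff.1 hy
    have hlt : π y < π x := by
      simp only [NS, Finset.mem_filter, hyN, true_and, not_le] at hyNS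
      exact (div_lt_one (hπ x)).1 hyNS
    have hxy : y ≠ x := fun h => hNirr (h ▸ hyN)
    have hystar : y ≠ xstar := by
      rintro rfl
      linarith [hxstar x]
    exact mul_le_mul
      (infMH_le_div_of_le hM hML (hπ x) (hπ y) (hNsym y hyN) hxy hlt.le (hZ y hystar))
      (by linarith [driftFn_le_exp_one hm0 hm1 (hπm y), one_le_driftFn hm0 hm1 (hπ x).le (hπ1 x)])
      (sub_nonneg.2 (driftFn_anti hm0 hm1 (hπ y) hlt.le)) (div_nonneg (by linarith) (by linarith))
  calc _ ≤ (N x \ NS π N 1 x).card • (M / L * (Real.exp 1 - 1)) :=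
        Finset.sum_le_card_nsmul _ _ _ hterm
    _ ≤ M * (M / L * (Real.exp 1 - 1)) := by
        rw [nsmul_eq_mul]
        exact mul_le_mul_of_nonneg_right
          ((Nat.cast_le.2 (Finset.card_le_card Finset.sdiff_subset)).trans hcard)
          (mul_nonneg (div_nonneg (by linarith) (by linarith)) he)
    _ = (Real.exp 1 - 1) * M ^ 2 / L := by ring

lemma sum_NS_one_sdiff_NS_nonpos (hM : 0 ≤ M) (hML : M ≤ L) (hπ : ∀ z, 0 < π z) (hm0 : 0 < m)
    (hm1 : m < 1) (hNirr : x ∉ N x) :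
    ∑ y ∈ NS π N 1 x \ NS π N M x, infMH π N M L x y * (driftFn m (π y) - driftFn m (π x)) ≤
      0 := by
  refine Finset.sum_nonpos fun y hy => ?_
  obtain ⟨hyN, hy1⟩ := Finset.mem_filter.1 (Finset.mem_sdiff.1 hy).1
  have hxy : y ≠ x := fun h => hNirr (h ▸ hyN)
  exact mul_nonpos_of_nonneg_of_nonpos (infMH_nonneg hM hML (fun z => (hπ z).le) hxy)
    (sub_nonpos.2 (driftFn_anti hm0 hm1 (hπ x) ((one_le_div (hπ x)).1 hy1)))

lemma sum_NS_le (hML : M ^ 2 ≤ L) (hπ : ∀ z, 0 < π z) (hm0 : 0 < m) (hm1 : m < 1)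
    (hπm : ∀ z, m ≤ π z) (hπ1 : ∀ z, π z ≤ 1) (hNirr : x ∉ N x) (hNsym : ∀ y ∈ N x, x ∈ N y)
    (hcard : ∀ z, ((N z).card : ℝ) ≤ M) {y₀ : X} (hy₀ : y₀ ∈ N x) (hLy₀ : L ≤ π y₀ / π x) :
    ∑ y ∈ NS π N M x, infMH π N M L x y * (driftFn m (π y) - driftFn m (π x)) ≤
      Real.log (L / M) / (4 * Real.log m) * driftFn m (π x) := by
  have hM : 1 ≤ M := le_trans (by exact_mod_cast Finset.card_pos.2 ⟨y₀, hy₀⟩) (hcard x)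
  have hML' : M ≤ L := by nlinarith
  have hZx : L ≤ Zh π N M L x := le_Zh_of_le_div (by linarith) hML' hy₀ hLy₀
  have hZx0 : 0 < Zh π N M L x := by linarith
  have hlm := Real.log_neg hm0 hm1
  set V := driftFn m (π x)
  set Z := Zh π N M L x
  have hV : 0 ≤ V := by linarith [one_le_driftFn hm0 hm1 (hπ x).le (hπ1 x)]
  have hterm : ∀ y ∈ NS π N M x, infMH π N M L x y * (driftFn m (π y) - V) ≤
      V / (2 * Real.log m * Z) * (clip M L (π y / π x) * Real.log (π y / π x)) := by
    intro y hy
    obtain ⟨hyN, hMy⟩ := Finset.mem_filter.1 hy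
    have hxy : y ≠ x := fun h => hNirr (h ▸ hyN)
    have hπxy : π x ≤ π y := by
      simpa using (le_div_iff₀ (hπ x)).1 (hM.trans hMy)
    have hZy : Zh π N M L y ≤ M * L :=
      (Zh_le hML' y).trans (mul_le_mul_of_nonneg_right (hcard y) (by linarith))
    rw [infMH_eq_of_le_div (by linarith) hML' (hπ x) hyN (hNsym y hyN) hxy hMy hZx hZy]
    calc clip M L (π y / π x) / Z * (driftFn m (π y) - V)
        ≤ clip M L (π y / π x) / Z * (V * (Real.log (π y / π x) / (2 * Real.log m))) :=
          mul_le_mul_of_nonneg_left (driftFn_sub_le hm0 hm1 (hπm x) hπxy (hπ1 y))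
            (div_nonneg (by linarith [le_clip (u := π y / π x) hML']) hZx0.le)
      _ = V / (2 * Real.log m * Z) * (clip M L (π y / π x) * Real.log (π y / π x)) := by
          field_simp
  have hcoef : V / (2 * Real.log m * Z) ≤ 0 :=
    div_nonpos_of_nonneg_of_nonpos hV (by nlinarith)
  calc _ ≤ ∑ y ∈ NS π N M x, V / (2 * Real.log m * Z) *
        (clip M L (π y / π x) * Real.log (π y / π x)) := Finset.sum_le_sum hterm
    _ = V / (2 * Real.log m * Z) *
        ∑ y ∈ NS π N M x, clip M L (π y / π x) * Real.log (π y / π x) := (Finset.mul_sum ..).symm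
    _ ≤ V / (2 * Real.log m * Z) * (Real.log (L / M) / 2 * Z) :=
        mul_le_mul_of_nonpos_left
          (half_log_div_mul_sum_clip_le (N x) (fun y => π y / π x) (hcard x) hML hy₀ hLy₀) hcoef
    _ = Real.log (L / M) / (4 * Real.log m) * V := by
        field_simp
        ring

end Drift

theorem sum_infMH_mul_driftFn_le {X : Type*} [Fintype X] [DecidableEq X] {π : X → ℝ}
    {N : X → Finset X} {M L m : ℝ} {x xstar : X} (hπ : ∀ z, 0 < π z) (hm0 : 0 < m)
    (hm1 : m < 1) (hπm : ∀ z, m ≤ π z) (hπ1 : ∀ z, π z ≤ 1) (hNirr : ∀ z, z ∉ N z)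
    (hNsym : ∀ z y, y ∈ N z → z ∈ N y) (hcard : ∀ z, ((N z).card : ℝ) ≤ M) (hML : M ^ 2 ≤ L)
    (hxstar : ∀ z, π z ≤ π xstar) (hgreat : ∀ z, z ≠ xstar → ∃ y ∈ N z, L ≤ π y / π z)
    (hx : x ≠ xstar) :
    ∑ y, infMH π N M L x y * driftFn m (π y) ≤
      (1 + Real.log (L / M) / (4 * Real.log m) + (Real.exp 1 - 1) * M ^ 2 / L) *
        driftFn m (π x) := by
  obtain ⟨y₀, hy₀, hLy₀⟩ := hgreat x hx
  have hM : 1 ≤ M := le_trans (by exact_mod_cast Finset.card_pos.2 ⟨y₀, hy₀⟩) (hcard x)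
  have hML' : M ≤ L := by nlinarith
  have hZ : ∀ z, z ≠ xstar → L ≤ Zh π N M L z := fun z hz => by
    obtain ⟨y, hy, hLy⟩ := hgreat z hz
    exact le_Zh_of_le_div (by linarith) hML' hy hLy
  have hNS₁ : NS π N 1 x ⊆ N x := Finset.filter_subset _ _
  have hNS : NS π N M x ⊆ NS π N 1 x :=
    Finset.monotone_filter_right _ fun _ _ hy => hM.trans hy
  have hbad := sum_sdiff_NS_one_le hM hML' hπ hm0 hm1 hπm hπ1 (hNirr x) (hNsym x) (hcard x)
    hxstar hZ
  have hmid := sum_NS_one_sdiff_NS_nonpos (L := L) (by linarith) hML' hπ hm0 hm1 (hNirr x)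
  have hgood := sum_NS_le hML hπ hm0 hm1 hπm hπ1 (hNirr x) (hNsym x) hcard hy₀ hLy₀
  have hV := one_le_driftFn hm0 hm1 (hπ x).le (hπ1 x)
  have hbad₀ : 0 ≤ (Real.exp 1 - 1) * M ^ 2 / L :=
    div_nonneg (mul_nonneg (by linarith [Real.add_one_le_exp 1]) (sq_nonneg M)) (by linarith)
  rw [sum_infMH_mul, ← Finset.sum_sdiff hNS₁, ← Finset.sum_sdiff hNS]
  nlinarith

theorem stmt4_general {X : Type*} [Fintype X] [DecidableEq X] [Nonempty X]
    (π : X → ℝ) (hπpos : ∀ x, 0 < π x) (hπsum : ∑ x, π x = 1)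
    (N : X → Finset X)
    (hNirr : ∀ x, x ∉ N x)
    (hNsym : ∀ x y, y ∈ N x → x ∈ N y)
    (xstar : X) (hxstar : ∀ x, π x ≤ π xstar)
    (L : ℝ) (hL1 : ((Mmax N : ℝ)) ^ 2 < L) (hL2 : L ≤ Rval π N xstar)
    (hpm : piMin π < 1)
    (x : X) (hx : x ≠ xstar) :
    ∑ y, infMH π N (Mmax N) L x y * Real.exp (Real.log (π y) / Real.log (piMin π)) ≤
      (1 + Real.log (L / (Mmax N : ℝ)) / (4 * Real.log (piMin π)) +
        (Real.exp 1 - 1) * ((Mmax N : ℝ)) ^ 2 / L) *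
        Real.exp (Real.log (π x) / Real.log (piMin π)) := by
  have hπ1 : ∀ y, π y ≤ 1 := fun y =>
    hπsum ▸ Finset.single_le_sum (fun z _ => (hπpos z).le) (Finset.mem_univ y)
  have hπm : ∀ y, piMin π ≤ π y := fun y => ciInf_le (Set.finite_range π).bddBelow y
  have hm0 : 0 < piMin π := by
    obtain ⟨z, hz⟩ := exists_eq_ciInf_of_finite (f := π)
    rw [piMin, ← hz]
    exact hπpos z
  have hcard : ∀ z, ((N z).card : ℝ) ≤ Mmax N := fun z =>
    Nat.cast_le.2 (Finset.le_sup (f := fun w => (N w).card) (Finset.mem_univ z))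
  have hL : 0 < L := (sq_nonneg _).trans_lt hL1
  exact sum_infMH_mul_driftFn_le hπpos hm0 hpm hπm hπ1 hNirr hNsym hcard hL1.le hxstar
    (fun z hz => exists_le_div_of_le_Rval hL hL2 hz) hx

theorem stmt4 {X : Type*} [Fintype X] [DecidableEq X] [Nonempty X]
    (π : X → ℝ) (hπpos : ∀ x, 0 < π x) (hπsum : ∑ x, π x = 1)
    (N : X → Finset X)
    (hNirr : ∀ x, x ∉ N x)
    (hNsym : ∀ x y, y ∈ N x → x ∈ N y)
    (hNconn : ∀ x y : X, Relation.ReflTransGen (fun a b => b ∈ N a) x y)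
    (xstar : X) (hxstar : ∀ x, π x ≤ π xstar)
    (hRM : ((Mmax N : ℝ)) ^ 2 < Rval π N xstar)
    (L : ℝ) (hL1 : ((Mmax N : ℝ)) ^ 2 < L) (hL2 : L ≤ Rval π N xstar)
    (hpm : piMin π < 1)
    (x : X) (hx : x ≠ xstar) :
    ∑ y, infMH π N (Mmax N) L x y * Real.exp (Real.log (π y) / Real.log (piMin π)) ≤
      (1 + Real.log (L / (Mmax N : ℝ)) / (4 * Real.log (piMin π)) +
        (Real.exp 1 - 1) * ((Mmax N : ℝ)) ^ 2 / L) *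
        Real.exp (Real.log (π x) / Real.log (piMin π)) :=
  stmt4_general π hπpos hπsum N hNirr hNsym xstar hxstar L hL1 hL2 hpm x hx
end

section
/- Let X₀ ⊆ X, x₀ ∈ X₀, η ∈ (0,1), and ε ∈ (0,1/2) be such that (i) ρ = R|_{X₀}/M > 1, (ii) π(x₀) ≥ η, and (iii) π(X₀) ≥ 1 − ε²·η²/5. Then τ_{x₀}(P₀^lazy, ε) ≤ c(ρ)·M·log(1/(2·ε²·η²)). -/
open Finset

/-!
Write `h_t = P^t(x₀, ·) / π` for the lazy chain `P` and `a_t = ∑ π (h_t - 1)²` for its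
chi-square distance to `π`. Laziness makes `a_{t+1} ≤ a_t - E(h_t - 1)`, with `E` the Dirichlet
form. Every `x ∈ X₀` other than the mode `x₀*` has a neighbour in `X₀` of mass at least
`ρ M π(x)`; iterating this choice gives canonical paths into `x₀*` whose fibres lose mass
geometrically, and a weighted Cauchy–Schwarz inequality along them gives a Poincaré inequality
on `X₀` with constant `c(ρ) M`. Outside `X₀` the warm start `|h_t - 1| ≤ 1/η` limits the error
to `4ε²/5`, so `a_{t+1} ≤ (1 - λ) a_t + λ 4ε²/5` with `λ = 1/(c(ρ) M)`. After
`c(ρ) M log(1/(2ε²η²))` steps `a_t ≤ 4ε²`, and Cauchy–Schwarz turns this into total variation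
at most `ε`.
-/

open Matrix

section ReversibleChain

variable {X : Type*} [Fintype X] [DecidableEq X] {π : X → ℝ} {P : Matrix X X ℝ}

def IsReversible (π : X → ℝ) (P : Matrix X X ℝ) : Prop :=
  ∀ x y, π x * P x y = π y * P y x

noncomputable def dirichletForm (π : X → ℝ) (P : Matrix X X ℝ) (f : X → ℝ) : ℝ :=
  2⁻¹ * ∑ x, ∑ y, (f x - f y) ^ 2 * P x y * π x

lemma lazyM_apply (P : Matrix X X ℝ) (x y : X) :
    lazyM P x y = 2⁻¹ * (P x y + (1 : Matrix X X ℝ) x y) := rfl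

lemma lazyM_mem_rowStochastic (hP : P ∈ rowStochastic ℝ X) : lazyM P ∈ rowStochastic ℝ X := by
  have h := convex_rowStochastic hP (one_mem _) (by norm_num : (0 : ℝ) ≤ 2⁻¹)
    (by norm_num : (0 : ℝ) ≤ 2⁻¹) (by norm_num)
  rwa [← smul_add] at h

lemma isReversible_lazyM (hrev : IsReversible π P) : IsReversible π (lazyM P) := by
  intro x y
  rcases eq_or_ne x y with rfl | hxy
  · rfl
  · simp only [lazyM_apply, one_apply_ne hxy, one_apply_ne hxy.symm]
    linear_combination 2⁻¹ * hrev x y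

lemma IsReversible.sum_mul_apply (hrev : IsReversible π P) (hP : P ∈ rowStochastic ℝ X)
    (y : X) : ∑ x, π x * P x y = π y := by
  simp_rw [hrev _ y, ← mul_sum, sum_row_of_mem_rowStochastic hP, mul_one]

lemma sq_mulVec_le (hP : P ∈ rowStochastic ℝ X) (f : X → ℝ) (y : X) :
    (P *ᵥ f) y ^ 2 ≤ (P *ᵥ (f ^ 2)) y := by
  have h := sum_sq_le_sum_mul_sum_of_sq_le_mul univ (r := fun x => P y x * f x)
    (fun x _ => nonneg_of_mem_rowStochastic hP (i := y) (j := x))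
    (fun x _ => mul_nonneg (nonneg_of_mem_rowStochastic hP) (sq_nonneg (f x)))
    (fun x _ => le_of_eq (by ring))
  simpa [mulVec, dotProduct, sum_row_of_mem_rowStochastic hP] using h

lemma IsReversible.sum_mul_mulVec_sq_le (hrev : IsReversible π P) (hP : P ∈ rowStochastic ℝ X)
    (hπ : ∀ x, 0 ≤ π x) (f : X → ℝ) : ∑ y, π y * (P *ᵥ f) y ^ 2 ≤ ∑ x, π x * f x ^ 2 :=
  calc ∑ y, π y * (P *ᵥ f) y ^ 2 ≤ ∑ y, π y * (P *ᵥ (f ^ 2)) y :=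
        sum_le_sum fun y _ => mul_le_mul_of_nonneg_left (sq_mulVec_le hP f y) (hπ y)
    _ = ∑ x, (∑ y, π y * P y x) * f x ^ 2 := by
        simp only [mulVec, dotProduct, mul_sum, sum_mul, Pi.pow_apply]
        rw [sum_comm]
        exact sum_congr rfl fun _ _ => sum_congr rfl fun _ _ => by ring
    _ = ∑ x, π x * f x ^ 2 := by simp_rw [hrev.sum_mul_apply hP]

lemma IsReversible.dirichletForm_eq (hrev : IsReversible π P) (hP : P ∈ rowStochastic ℝ X)
    (f : X → ℝ) :
    dirichletForm π P f = ∑ x, π x * f x ^ 2 - ∑ x, π x * (P *ᵥ f) x * f x := by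
  have hsplit : ∀ x y, (f x - f y) ^ 2 * P x y * π x
      = π x * f x ^ 2 * P x y + π x * P x y * f y ^ 2 - 2 * (π x * (P x y * f y) * f x) :=
    fun x y => by ring
  have hcross : ∑ x, ∑ y, π x * (P x y * f y) * f x = ∑ x, π x * (P *ᵥ f) x * f x := by
    unfold mulVec dotProduct
    simp only [mul_sum, sum_mul]
  have hright : ∑ x, ∑ y, π x * P x y * f y ^ 2 = ∑ y, π y * f y ^ 2 := by
    rw [sum_comm]
    simp_rw [← sum_mul, hrev.sum_mul_apply hP]
  simp_rw [dirichletForm, hsplit, sum_sub_distrib, sum_add_distrib, ← mul_sum, hright, hcross,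
    sum_row_of_mem_rowStochastic hP, mul_one]
  ring

lemma IsReversible.sum_mul_lazyM_mulVec_sq_le (hrev : IsReversible π P)
    (hP : P ∈ rowStochastic ℝ X) (hπ : ∀ x, 0 ≤ π x) (f : X → ℝ) :
    ∑ y, π y * (lazyM P *ᵥ f) y ^ 2 ≤ ∑ x, π x * f x ^ 2 - dirichletForm π (lazyM P) f := by
  have hlazy : ∀ y, (lazyM P *ᵥ f) y = 2⁻¹ * ((P *ᵥ f) y + f y) := by
    intro y
    simp only [lazyM, smul_mulVec, add_mulVec, one_mulVec, Pi.smul_apply, Pi.add_apply,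
      smul_eq_mul]
  rw [(isReversible_lazyM hrev).dirichletForm_eq (lazyM_mem_rowStochastic hP), sub_sub_cancel]
  have hcontr := hrev.sum_mul_mulVec_sq_le hP hπ f
  have hkey : ∑ x, π x * (lazyM P *ᵥ f) x * f x - ∑ y, π y * (lazyM P *ᵥ f) y ^ 2
      = 4⁻¹ * (∑ x, π x * f x ^ 2 - ∑ y, π y * (P *ᵥ f) y ^ 2) := by
    simp only [hlazy, mul_sum, ← sum_sub_distrib]
    exact sum_congr rfl fun _ _ => by ring
  linarith

lemma dirichletForm_nonneg (hP : P ∈ rowStochastic ℝ X) (hπ : ∀ x, 0 ≤ π x)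
    (f : X → ℝ) : 0 ≤ dirichletForm π P f :=
  mul_nonneg (by norm_num) (sum_nonneg fun x _ => sum_nonneg fun y _ =>
    mul_nonneg (mul_nonneg (sq_nonneg _) (nonneg_of_mem_rowStochastic hP)) (hπ x))

lemma sum_sum_sq_sub_mul_le_dirichletForm_lazyM (hP : P ∈ rowStochastic ℝ X)
    (hπ : ∀ x, 0 ≤ π x) (S : Finset X) (f : X → ℝ) :
    ∑ x ∈ S, ∑ y ∈ S, (f x - f y) ^ 2 * P x y * π x ≤ 4 * dirichletForm π (lazyM P) f := by
  have hterm : ∀ x y,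
      (f x - f y) ^ 2 * P x y * π x = 2 * ((f x - f y) ^ 2 * lazyM P x y * π x) := fun x y => by
    rcases eq_or_ne x y with rfl | hxy
    · simp
    · rw [lazyM_apply, one_apply_ne hxy]; ring
  have hnonneg : ∀ x y, 0 ≤ (f x - f y) ^ 2 * lazyM P x y * π x := fun x y =>
    mul_nonneg (mul_nonneg (sq_nonneg _)
      (nonneg_of_mem_rowStochastic (lazyM_mem_rowStochastic hP))) (hπ x)
  have hmono : ∑ x ∈ S, ∑ y ∈ S, (f x - f y) ^ 2 * lazyM P x y * π x
      ≤ ∑ x, ∑ y, (f x - f y) ^ 2 * lazyM P x y * π x :=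
    (sum_le_sum fun x _ => sum_le_univ_sum_of_nonneg (hnonneg x)).trans
      (sum_le_univ_sum_of_nonneg fun x => sum_nonneg fun y _ => hnonneg x y)
  simp_rw [hterm, ← mul_sum, dirichletForm]
  linarith

lemma IsReversible.sum_mul_lazyM_mulVec_sq_le_of_le (hrev : IsReversible π P)
    (hP : P ∈ rowStochastic ℝ X) (hπ : ∀ x, 0 ≤ π x) {C b : ℝ} (hC : 0 < C) {f : X → ℝ}
    (hpoinc : ∑ x, π x * f x ^ 2 ≤ C * dirichletForm π (lazyM P) f + b) :
    ∑ y, π y * (lazyM P *ᵥ f) y ^ 2 ≤ (1 - C⁻¹) * ∑ x, π x * f x ^ 2 + C⁻¹ * b := by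
  have hdecay := hrev.sum_mul_lazyM_mulVec_sq_le hP hπ f
  have hCE : C⁻¹ * (C * dirichletForm π (lazyM P) f) = dirichletForm π (lazyM P) f :=
    inv_mul_cancel_left₀ hC.ne' _
  nlinarith [mul_le_mul_of_nonneg_left hpoinc (inv_nonneg.2 hC.le)]

end ReversibleChain

section RandomWalkMetropolis

variable {X : Type*} [Fintype X] {π : X → ℝ} {N : X → Finset X} {x y : X}

lemma card_le_Mmax (N : X → Finset X) (x : X) : #(N x) ≤ Mmax N :=
  le_sup (f := fun y => #(N y)) (mem_univ x)

variable [DecidableEq X]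

lemma rwMH_apply_of_mem (h : y ∈ N x) :
    rwMH π N x y = min ((#(N x) : ℝ))⁻¹ (π y / (π x * #(N y))) := by
  simp [rwMH, h]

lemma rwMH_apply_self (hNirr : x ∉ N x) :
    rwMH π N x x = 1 - ∑ z ∈ N x, min ((#(N x) : ℝ))⁻¹ (π z / (π x * #(N z))) := by
  simp [rwMH, hNirr]

lemma rwMH_apply_of_not_mem (h : y ∉ N x) (hne : y ≠ x) : rwMH π N x y = 0 := by
  simp [rwMH, h, hne]

lemma rwMH_mem_rowStochastic (hπ : ∀ x, 0 < π x) (hNirr : ∀ x, x ∉ N x) :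
    rwMH π N ∈ rowStochastic ℝ X := by
  refine mem_rowStochastic_iff_sum.2 ⟨fun x y => ?_, fun x => ?_⟩
  · by_cases hxy : y ∈ N x
    · rw [rwMH_apply_of_mem hxy]
      exact le_min (by positivity) (div_nonneg (hπ y).le (mul_nonneg (hπ x).le (by positivity)))
    by_cases hne : y = x
    · subst hne
      rw [rwMH_apply_self (hNirr y), sub_nonneg]
      calc ∑ z ∈ N y, min ((#(N y) : ℝ))⁻¹ (π z / (π y * #(N z)))
          ≤ ∑ _z ∈ N y, ((#(N y) : ℝ))⁻¹ := sum_le_sum fun _ _ => min_le_left _ _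
        _ ≤ 1 := by rw [sum_const, nsmul_eq_mul]; exact mul_inv_le_one
    · rw [rwMH_apply_of_not_mem hxy hne]
  · rw [← sum_subset (subset_univ (insert x (N x))) fun y _ hy => by
      rw [mem_insert, not_or] at hy; exact rwMH_apply_of_not_mem hy.2 hy.1,
      sum_insert (hNirr x), rwMH_apply_self (hNirr x),
      sum_congr rfl fun y hy => rwMH_apply_of_mem hy, sub_add_cancel]

lemma isReversible_rwMH (hπ : ∀ x, 0 < π x) (hNsym : ∀ x y, y ∈ N x → x ∈ N y) :
    IsReversible π (rwMH π N) := by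
  intro x y
  by_cases hxy : y ∈ N x
  · have hyx := hNsym x y hxy
    rw [rwMH_apply_of_mem hxy, rwMH_apply_of_mem hyx, mul_min_of_nonneg _ _ (hπ x).le,
      mul_min_of_nonneg _ _ (hπ y).le, min_comm]
    congr 1 <;> field_simp [(hπ x).ne', (hπ y).ne']
  by_cases hne : y = x
  · rw [hne]
  · rw [rwMH_apply_of_not_mem hxy hne,
      rwMH_apply_of_not_mem (fun h => hxy (hNsym y x h)) (Ne.symm hne), mul_zero, mul_zero]

lemma inv_Mmax_le_rwMH_apply (hπ : ∀ x, 0 < π x) (hNsym : ∀ x y, y ∈ N x → x ∈ N y)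
    (hxy : y ∈ N x) (hle : π x ≤ π y) : (Mmax N : ℝ)⁻¹ ≤ rwMH π N x y := by
  have hcard : ∀ {u v}, v ∈ N u → (0 : ℝ) < #(N u) ∧ (#(N u) : ℝ) ≤ Mmax N := fun h =>
    ⟨by exact_mod_cast card_pos.2 ⟨_, h⟩, by exact_mod_cast card_le_Mmax N _⟩
  obtain ⟨hx0, hxM⟩ := hcard hxy
  obtain ⟨hy0, hyM⟩ := hcard (hNsym x y hxy)
  rw [rwMH_apply_of_mem hxy]
  refine le_min (inv_anti₀ hx0 hxM) ?_
  rw [le_div_iff₀ (mul_pos (hπ x) hy0), inv_mul_le_iff₀ (hx0.trans_le hxM)]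
  calc π x * #(N y) ≤ π y * Mmax N := mul_le_mul hle hyM hy0.le (hπ y).le
    _ = Mmax N * π y := mul_comm _ _

end RandomWalkMetropolis

section LikelihoodRatio

variable {X : Type*} [Fintype X] [DecidableEq X] {π : X → ℝ} {P : Matrix X X ℝ}

noncomputable def likelihoodRatio (P : Matrix X X ℝ) (π : X → ℝ) (x : X) (t : ℕ) : X → ℝ :=
  fun y => (P ^ t) x y / π y

lemma likelihoodRatio_succ (hπ : ∀ x, 0 < π x) (hrev : IsReversible π P) (x : X) (t : ℕ) :
    likelihoodRatio P π x (t + 1) = P *ᵥ likelihoodRatio P π x t := by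
  ext y
  have hdiv : ∀ z, P z y / π y = P y z / π z := fun z => by
    rw [div_eq_div_iff (hπ y).ne' (hπ z).ne']
    linear_combination hrev z y
  simp only [likelihoodRatio, pow_succ, mul_apply, sum_div, mulVec, dotProduct]
  exact sum_congr rfl fun z _ => by rw [mul_div_assoc, hdiv, mul_div_left_comm]

lemma sum_mul_likelihoodRatio (hπ : ∀ x, 0 < π x) (hP : P ∈ rowStochastic ℝ X) (x : X)
    (t : ℕ) : ∑ y, π y * likelihoodRatio P π x t y = 1 := by
  simp_rw [likelihoodRatio, mul_div_cancel₀ _ (hπ _).ne']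
  exact sum_row_of_mem_rowStochastic (pow_mem hP t) x

lemma likelihoodRatio_nonneg_le (hπ : ∀ x, 0 < π x) (hrev : IsReversible π P)
    (hP : P ∈ rowStochastic ℝ X) (x : X) (t : ℕ) (y : X) :
    0 ≤ likelihoodRatio P π x t y ∧ likelihoodRatio P π x t y ≤ (π x)⁻¹ := by
  induction t generalizing y with
  | zero =>
    rcases eq_or_ne x y with rfl | hxy
    · simp [likelihoodRatio, (hπ x).le]
    · simp [likelihoodRatio, one_apply_ne hxy, (hπ x).le]
  | succ t ih =>
    rw [likelihoodRatio_succ hπ hrev]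
    refine ⟨nonneg_mulVec_of_mem_rowStochastic hP (fun z => (ih z).1) y, ?_⟩
    calc (P *ᵥ likelihoodRatio P π x t) y ≤ ∑ z, P y z * (π x)⁻¹ :=
          sum_le_sum fun z _ => mul_le_mul_of_nonneg_left (ih z).2 (nonneg_of_mem_rowStochastic hP)
      _ = (π x)⁻¹ := by rw [← sum_mul, sum_row_of_mem_rowStochastic hP, one_mul]

lemma abs_likelihoodRatio_sub_one_le (hπ : ∀ x, 0 < π x) (hπ1 : ∀ x, π x ≤ 1)
    (hrev : IsReversible π P) (hP : P ∈ rowStochastic ℝ X) (x : X) (t : ℕ) (y : X) :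
    |likelihoodRatio P π x t y - 1| ≤ (π x)⁻¹ := by
  obtain ⟨h0, h1⟩ := likelihoodRatio_nonneg_le hπ hrev hP x t y
  have : 1 ≤ (π x)⁻¹ := one_le_inv₀ (hπ x) |>.2 (hπ1 x)
  rw [abs_le]
  constructor <;> linarith

lemma sum_mul_likelihoodRatio_zero_sub_one_sq (hπ : ∀ x, 0 < π x) (hπsum : ∑ x, π x = 1)
    (x : X) : ∑ y, π y * (likelihoodRatio P π x 0 y - 1) ^ 2 = (π x)⁻¹ - 1 := by
  have hδ : ∀ y, π y * (likelihoodRatio P π x 0 y - 1) ^ 2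
      = (if y = x then (π x)⁻¹ - 2 else 0) + π y := by
    intro y
    rcases eq_or_ne y x with rfl | hyx
    · simp only [likelihoodRatio, pow_zero, one_apply_eq, if_true]
      field_simp [(hπ y).ne']
      ring
    · simp [likelihoodRatio, one_apply_ne hyx.symm, hyx]
  simp_rw [hδ, sum_add_distrib, sum_ite_eq', mem_univ, if_true, hπsum]
  ring

end LikelihoodRatio

section TotalVariation

variable {X : Type*} [Fintype X]

lemma tvDist_le_half_sum_abs {ζ μ : X → ℝ} (h : ∑ x, ζ x = ∑ x, μ x) :
    tvDist ζ μ ≤ 2⁻¹ * ∑ x, |ζ x - μ x| := by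
  classical
  refine ciSup_le fun A => ?_
  have hcompl : ∑ x ∈ A, (ζ x - μ x) = -∑ x ∈ univ \ A, (ζ x - μ x) := by
    rw [eq_neg_iff_add_eq_zero, add_comm, sum_sdiff (subset_univ A), sum_sub_distrib, h,
      sub_self]
  have hA := abs_sum_le_sum_abs (fun x => ζ x - μ x) A
  have hAc := abs_sum_le_sum_abs (fun x => ζ x - μ x) (univ \ A)
  have hsplit := sum_sdiff (subset_univ A) (f := fun x => |ζ x - μ x|)
  rw [← sum_sub_distrib]
  rw [hcompl, abs_neg] at hA ⊢
  linarith

lemma tvDist_le_of_sum_mul_sq_le {ζ π : X → ℝ} (hπ : ∀ x, 0 < π x) (hπsum : ∑ x, π x = 1)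
    (hζsum : ∑ x, ζ x = 1) {ε : ℝ} (hε : 0 ≤ ε)
    (h : ∑ y, π y * (ζ y / π y - 1) ^ 2 ≤ (2 * ε) ^ 2) : tvDist ζ π ≤ ε := by
  have hterm : ∀ y, π y * (ζ y / π y - 1) ^ 2 = |ζ y - π y| ^ 2 / π y := fun y => by
    rw [sq_abs]
    field_simp [(hπ y).ne']
  have hCS := sq_sum_div_le_sum_sq_div univ (fun y => |ζ y - π y|) fun y _ => hπ y
  rw [hπsum, div_one, ← sum_congr rfl fun y _ => hterm y] at hCS
  have habs : ∑ y, |ζ y - π y| ≤ 2 * ε :=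
    pow_le_pow_iff_left₀ (sum_nonneg fun _ _ => abs_nonneg _) (by positivity)
      two_ne_zero |>.1 (hCS.trans h)
  linarith [tvDist_le_half_sum_abs (hζsum.trans hπsum.symm)]

end TotalVariation

section CanonicalPaths

variable {X : Type*}

lemma geom_sum_range_le_inv_one_sub {s : ℝ} (hs0 : 0 ≤ s) (hs1 : s < 1) (K : ℕ) :
    ∑ i ∈ range K, s ^ i ≤ (1 - s)⁻¹ := by
  have h := geom_sum_Ico_le_of_lt_one (m := 0) (n := K) hs0 hs1
  rwa [← range_eq_Ico, pow_zero, ← inv_eq_one_div] at h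

lemma sq_sub_le_inv_one_sub_mul_sum {s : ℝ} (hs0 : 0 < s) (hs1 : s < 1) (g : ℕ → ℝ) (K : ℕ) :
    (g 0 - g K) ^ 2 ≤ (1 - s)⁻¹ * ∑ i ∈ range K, (s ^ i)⁻¹ * (g i - g (i + 1)) ^ 2 := by
  rw [← sum_range_sub' g K]
  have hCS := sum_sq_le_sum_mul_sum_of_sq_le_mul (range K) (r := fun i => g i - g (i + 1))
    (f := fun i => s ^ i) (g := fun i => (s ^ i)⁻¹ * (g i - g (i + 1)) ^ 2)
    (fun i _ => by positivity) (fun i _ => by positivity)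
    (fun i _ => by rw [mul_inv_cancel_left₀ (pow_ne_zero i hs0.ne')])
  exact hCS.trans (mul_le_mul_of_nonneg_right (geom_sum_range_le_inv_one_sub hs0.le hs1 K)
    (sum_nonneg fun i _ => by positivity))

variable {S : Finset X} {σ : X → X} {x₀ : X}

lemma iterate_card_eq_of_lt {β : Type*} [Preorder β] {v : X → β} (hfix : σ x₀ = x₀)
    (hS : Set.MapsTo σ S S) (hlt : ∀ x ∈ S, x ≠ x₀ → v x < v (σ x)) :
    ∀ x ∈ S, σ^[#S] x = x₀ := by
  classical
  suffices h : ∀ n, ∀ x ∈ S, #{y ∈ S | v x < v y} ≤ n → σ^[n] x = x₀ from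
    fun x hx => h _ x hx (card_filter_le _ _)
  intro n
  induction n with
  | zero =>
    intro x hx hcard
    by_contra hne
    have hmem : σ x ∈ {y ∈ S | v x < v y} := mem_filter.2 ⟨hS hx, hlt x hx hne⟩
    exact (card_pos.2 ⟨_, hmem⟩).ne' (Nat.le_zero.1 hcard)
  | succ n ih =>
    intro x hx hcard
    by_cases hne : x = x₀
    · rw [hne, Function.iterate_fixed hfix]
    have hssub : {y ∈ S | v (σ x) < v y} ⊂ {y ∈ S | v x < v y} := by
      refine ssubset_iff_of_subset (fun y hy => ?_) |>.2 ⟨σ x, ?_, fun h => ?_⟩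
      · rw [mem_filter] at hy ⊢
        exact ⟨hy.1, (hlt x hx hne).trans hy.2⟩
      · exact mem_filter.2 ⟨hS hx, hlt x hx hne⟩
      · exact lt_irrefl _ (mem_filter.1 h).2
    rw [Function.iterate_succ_apply]
    exact ih (σ x) (hS hx) (by have := card_lt_card hssub; omega)

variable {π : X → ℝ}

lemma sum_filter_iterate_le [DecidableEq X] {c : ℝ} (hc : 0 ≤ c) (hπ : ∀ x, 0 ≤ π x)
    (hfix : σ x₀ = x₀) (hS : Set.MapsTo σ S S)
    (hstep : ∀ u, u ≠ x₀ → ∑ x ∈ S with σ x = u, π x ≤ c * π u) :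
    ∀ i z, z ≠ x₀ → ∑ x ∈ S with σ^[i] x = z, π x ≤ c ^ i * π z := by
  intro i
  induction i with
  | zero =>
    intro z _
    rw [Function.iterate_zero, sum_filter]
    simp only [id, sum_ite_eq', pow_zero, one_mul]
    split_ifs
    exacts [le_rfl, hπ z]
  | succ i ih =>
    intro z hz
    have hmaps : ∀ x ∈ {x ∈ S | σ^[i + 1] x = z}, σ x ∈ {u ∈ S | σ^[i] u = z} := fun x hx => by
      rw [mem_filter] at hx ⊢
      exact ⟨hS hx.1, by rw [← Function.iterate_succ_apply, hx.2]⟩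
    rw [← sum_fiberwise_of_maps_to hmaps]
    calc ∑ u ∈ S with σ^[i] u = z, ∑ x ∈ {x ∈ S | σ^[i + 1] x = z} with σ x = u, π x
        ≤ ∑ u ∈ S with σ^[i] u = z, c * π u := by
          refine sum_le_sum fun u hu => ?_
          have hu₀ : u ≠ x₀ := fun h => hz (by rw [← (mem_filter.1 hu).2, h,
            Function.iterate_fixed hfix])
          refine le_trans (sum_le_sum_of_subset_of_nonneg (fun x hx => ?_)
            fun x _ _ => hπ x) (hstep u hu₀)
          simp only [mem_filter] at hx ⊢
          exact ⟨hx.1.1, hx.2⟩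
      _ ≤ c ^ (i + 1) * π z := by
          rw [← mul_sum, pow_succ', mul_assoc]
          exact mul_le_mul_of_nonneg_left (ih z hz) hc

lemma sum_mul_sq_sub_le_of_iterate [DecidableEq X] {s : ℝ} {K : ℕ} (hs0 : 0 < s) (hs1 : s < 1)
    (hπ : ∀ x, 0 ≤ π x) (hfix : σ x₀ = x₀) (hS : Set.MapsTo σ S S)
    (hK : ∀ x ∈ S, σ^[K] x = x₀)
    (hfiber : ∀ i z, z ≠ x₀ → ∑ x ∈ S with σ^[i] x = z, π x ≤ (s ^ 2) ^ i * π z)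
    (f : X → ℝ) :
    ∑ x ∈ S, π x * (f x - f x₀) ^ 2 ≤ ((1 - s) ^ 2)⁻¹ * ∑ z ∈ S, π z * (f z - f (σ z)) ^ 2 := by
  set d : X → ℝ := fun z => (f z - f (σ z)) ^ 2
  have hd₀ : d x₀ = 0 := by simp [d, hfix]
  have hpath : ∀ x ∈ S, (f x - f x₀) ^ 2 ≤ (1 - s)⁻¹ * ∑ i ∈ range K, (s ^ i)⁻¹ * d (σ^[i] x) :=
    fun x hx => by
      simpa [← hK x hx, d, Function.iterate_succ_apply'] using
        sq_sub_le_inv_one_sub_mul_sum hs0 hs1 (fun i => f (σ^[i] x)) K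
  have hlevel : ∀ i, ∑ x ∈ S, π x * d (σ^[i] x) ≤ (s ^ 2) ^ i * ∑ z ∈ S, π z * d z := by
    intro i
    rw [← sum_fiberwise_of_maps_to fun x hx => hS.iterate i hx, mul_sum]
    refine sum_le_sum fun z _ => ?_
    rw [sum_congr rfl fun x hx => by rw [(mem_filter.1 hx).2], ← sum_mul, ← mul_assoc]
    rcases eq_or_ne z x₀ with rfl | hz
    · simp [hd₀]
    · exact mul_le_mul_of_nonneg_right (hfiber i z hz) (sq_nonneg _)
  have hW : 0 ≤ ∑ z ∈ S, π z * d z := sum_nonneg fun z _ => mul_nonneg (hπ z) (sq_nonneg _)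
  -- The Cauchy–Schwarz weights `(s ^ i)⁻¹` are paid for by the fibre masses `(s ^ 2) ^ i`,
  -- leaving a geometric series in `s`.
  calc ∑ x ∈ S, π x * (f x - f x₀) ^ 2
      ≤ ∑ x ∈ S, π x * ((1 - s)⁻¹ * ∑ i ∈ range K, (s ^ i)⁻¹ * d (σ^[i] x)) :=
        sum_le_sum fun x hx => mul_le_mul_of_nonneg_left (hpath x hx) (hπ x)
    _ = (1 - s)⁻¹ * ∑ i ∈ range K, (s ^ i)⁻¹ * ∑ x ∈ S, π x * d (σ^[i] x) := by
        simp_rw [mul_sum]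
        rw [sum_comm]
        exact sum_congr rfl fun _ _ => sum_congr rfl fun _ _ => by ring
    _ ≤ (1 - s)⁻¹ * ∑ i ∈ range K, s ^ i * ∑ z ∈ S, π z * d z := by
        refine mul_le_mul_of_nonneg_left (sum_le_sum fun i _ => ?_) (inv_nonneg.2 (by linarith))
        calc (s ^ i)⁻¹ * ∑ x ∈ S, π x * d (σ^[i] x)
            ≤ (s ^ i)⁻¹ * ((s ^ 2) ^ i * ∑ z ∈ S, π z * d z) :=
              mul_le_mul_of_nonneg_left (hlevel i) (by positivity)
          _ = s ^ i * ∑ z ∈ S, π z * d z := by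
              rw [← pow_mul, mul_comm 2, pow_mul, sq, ← mul_assoc,
                inv_mul_cancel_left₀ (pow_ne_zero i hs0.ne')]
    _ ≤ ((1 - s) ^ 2)⁻¹ * ∑ z ∈ S, π z * (f z - f (σ z)) ^ 2 := by
        rw [← sum_mul, sq, mul_inv, mul_assoc]
        exact mul_le_mul_of_nonneg_left
          (mul_le_mul_of_nonneg_right (geom_sum_range_le_inv_one_sub hs0.le hs1 K) hW)
          (inv_nonneg.2 (by linarith))

end CanonicalPaths

section PairSums

variable {X : Type*}

lemma sum_sum_sq_sub_mul_mul (S : Finset X) (p g : X → ℝ) :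
    ∑ x ∈ S, ∑ y ∈ S, (g x - g y) ^ 2 * p x * p y
      = 2 * (∑ x ∈ S, p x) * ∑ x ∈ S, p x * g x ^ 2 - 2 * (∑ x ∈ S, p x * g x) ^ 2 := by
  have hsplit : ∀ x y, (g x - g y) ^ 2 * p x * p y
      = p x * g x ^ 2 * p y + p x * (p y * g y ^ 2) - 2 * (p x * g x * (p y * g y)) :=
    fun x y => by ring
  simp_rw [hsplit, sum_sub_distrib, sum_add_distrib, ← mul_sum, ← sum_mul]
  ring

lemma sum_sum_sq_sub_mul_mul_le {S : Finset X} {p : X → ℝ} (hp : ∀ x ∈ S, 0 ≤ p x)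
    (hS : ∑ x ∈ S, p x ≤ 1) (g : X → ℝ) (c : ℝ) :
    ∑ x ∈ S, ∑ y ∈ S, (g x - g y) ^ 2 * p x * p y ≤ 2 * ∑ x ∈ S, p x * (g x - c) ^ 2 := by
  have h := sum_sum_sq_sub_mul_mul S p (fun x => g x - c)
  simp only [sub_sub_sub_cancel_right] at h
  have hV : 0 ≤ ∑ x ∈ S, p x * (g x - c) ^ 2 :=
    sum_nonneg fun x hx => mul_nonneg (hp x hx) (sq_nonneg _)
  rw [h]
  nlinarith [sq_nonneg (∑ x ∈ S, p x * (g x - c))]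

lemma sum_sum_sq_sub_mul_mul_le_add [Fintype X] [DecidableEq X] {π : X → ℝ}
    (hπ : ∀ x, 0 ≤ π x) (hπsum : ∑ x, π x = 1) (S : Finset X) {f : X → ℝ} {B : ℝ}
    (hf : ∀ x, |f x| ≤ B) :
    ∑ x, ∑ y, (f x - f y) ^ 2 * π x * π y
      ≤ ∑ x ∈ S, ∑ y ∈ S, (f x - f y) ^ 2 * π x * π y + 8 * B ^ 2 * (1 - ∑ x ∈ S, π x) := by
  set F : X × X → ℝ := fun q => (f q.1 - f q.2) ^ 2 * π q.1 * π q.2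
  set G : X × X → ℝ := fun q => π q.1 * π q.2
  have hFG : ∀ q, F q ≤ (2 * B) ^ 2 * G q := fun q => by
    have h : |f q.1 - f q.2| ≤ 2 * B := by linarith [abs_sub (f q.1) (f q.2), hf q.1, hf q.2]
    have h2 : (f q.1 - f q.2) ^ 2 ≤ (2 * B) ^ 2 := by
      rw [← sq_abs]; exact pow_le_pow_left₀ (abs_nonneg _) h 2
    simpa only [F, G, mul_assoc] using
      mul_le_mul_of_nonneg_right h2 (mul_nonneg (hπ q.1) (hπ q.2))
  have hsub : S ×ˢ S ⊆ univ ×ˢ univ := product_subset_product (subset_univ S) (subset_univ S)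
  have hsplit : ∀ H : X × X → ℝ, ∑ q ∈ univ ×ˢ univ, H q
      = ∑ q ∈ S ×ˢ S, H q + ∑ q ∈ univ ×ˢ univ \ S ×ˢ S, H q := fun H => by
    rw [add_comm, sum_sdiff hsub]
  have hG : ∑ q ∈ univ ×ˢ univ \ S ×ˢ S, G q = 1 - (∑ x ∈ S, π x) ^ 2 := by
    have h := hsplit G
    simp only [G, sum_product, ← mul_sum, ← sum_mul, hπsum] at h
    rw [sq]
    linarith
  have hout : ∑ q ∈ univ ×ˢ univ \ S ×ˢ S, F q ≤ (2 * B) ^ 2 * (1 - (∑ x ∈ S, π x) ^ 2) := by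
    rw [← hG, mul_sum]
    exact sum_le_sum fun q _ => hFG q
  have h := hsplit F
  simp only [F, sum_product] at h
  rw [h]
  nlinarith [sq_nonneg (1 - ∑ x ∈ S, π x), sq_nonneg B]

end PairSums

section RestrictedPoincare

variable {X : Type*} [Fintype X] [DecidableEq X] {π : X → ℝ} {N : X → Finset X}
  {X0 : Finset X} {xstar : X} {σ : X → X}

lemma exists_mem_mul_le_of_RvalRes_pos (hπ : ∀ x, 0 < π x) (hR : 0 < RvalRes π N X0 xstar)
    {x : X} (hx : x ∈ X0) (hne : x ≠ xstar) :
    ∃ y ∈ N x ∩ X0, RvalRes π N X0 xstar * π x ≤ π y := by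
  set S : Set ℝ := (fun y => π y / π x) '' ((N x ∩ X0 : Finset X) : Set X)
  have hle : RvalRes π N X0 xstar ≤ sSup S :=
    csInf_le (Set.toFinite _).bddBelow ⟨x, ⟨hx, hne⟩, rfl⟩
  have hS : S.Nonempty := by
    by_contra h
    rw [Set.not_nonempty_iff_eq_empty.1 h, Real.sSup_empty] at hle
    linarith
  obtain ⟨y, hy, hyeq⟩ := hS.csSup_mem (Set.toFinite _)
  refine ⟨y, hy, ?_⟩
  rw [← le_div_iff₀ (hπ x)]
  exact hle.trans_eq hyeq.symm

lemma exists_ascent_map (hπ : ∀ x, 0 < π x) (hR : 0 < RvalRes π N X0 xstar)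
    (hxstar : xstar ∈ X0) :
    ∃ σ : X → X, σ xstar = xstar ∧ Set.MapsTo σ X0 X0 ∧
      ∀ x ∈ X0, x ≠ xstar → σ x ∈ N x ∧ RvalRes π N X0 xstar * π x ≤ π (σ x) := by
  choose! τ hτ using fun x (hx : x ∈ X0) hne => exists_mem_mul_le_of_RvalRes_pos hπ hR hx hne
  refine ⟨fun x => if x = xstar then xstar else τ x, by simp, fun x hx => ?_,
    fun x hx hne => ?_⟩
  · dsimp only
    split_ifs with hne
    exacts [hxstar, (mem_inter.1 (hτ x hx hne).1).2]
  · simp only [hne, if_false]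
    exact ⟨(mem_inter.1 (hτ x hx hne).1).1, (hτ x hx hne).2⟩

lemma sum_filter_eq_le_of_ascent (hπ : ∀ x, 0 < π x) (hNsym : ∀ x y, y ∈ N x → x ∈ N y)
    (hfix : σ xstar = xstar) {R s : ℝ}
    (hσ : ∀ x ∈ X0, x ≠ xstar → σ x ∈ N x ∧ R * π x ≤ π (σ x))
    (hM : 0 < Mmax N) (hR : (Mmax N : ℝ) ≤ s ^ 2 * R) {u : X} (hu : u ≠ xstar) :
    ∑ x ∈ X0 with σ x = u, π x ≤ s ^ 2 * π u := by
  have hM' : (0 : ℝ) < Mmax N := by exact_mod_cast hM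
  have hR0 : 0 < R := pos_of_mul_pos_right (hM'.trans_le hR) (sq_nonneg s)
  have hmem : ∀ x ∈ {x ∈ X0 | σ x = u}, x ∈ N u ∧ π x ≤ s ^ 2 * π u / Mmax N := by
    intro x hx
    obtain ⟨hxX0, rfl⟩ := mem_filter.1 hx
    have hne : x ≠ xstar := fun h => hu (by rw [h, hfix])
    obtain ⟨hxN, hxR⟩ := hσ x hxX0 hne
    refine ⟨hNsym x _ hxN, ?_⟩
    rw [le_div_iff₀ hM']
    nlinarith [hπ x, hπ (σ x), sq_nonneg s]
  calc ∑ x ∈ X0 with σ x = u, π x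
      ≤ #{x ∈ X0 | σ x = u} • (s ^ 2 * π u / Mmax N) :=
        sum_le_card_nsmul _ _ _ fun x hx => (hmem x hx).2
    _ ≤ (Mmax N : ℕ) • (s ^ 2 * π u / Mmax N) := by
        refine nsmul_le_nsmul_left (by have := hπ u; positivity) ?_
        exact (card_le_card fun x hx => (hmem x hx).1).trans (card_le_Mmax N u)
    _ = s ^ 2 * π u := by rw [nsmul_eq_mul]; field_simp

lemma sum_mul_sq_sub_ascent_le (hπ : ∀ x, 0 < π x) (hNirr : ∀ x, x ∉ N x)
    (hNsym : ∀ x y, y ∈ N x → x ∈ N y)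
    (hfix : σ xstar = xstar) (hS : Set.MapsTo σ X0 X0)
    (hσ : ∀ x ∈ X0, x ≠ xstar → σ x ∈ N x ∧ π x ≤ π (σ x)) (f : X → ℝ) :
    ∑ z ∈ X0, π z * (f z - f (σ z)) ^ 2
      ≤ Mmax N * ∑ x ∈ X0, ∑ y ∈ X0, (f x - f y) ^ 2 * rwMH π N x y * π x := by
  rw [mul_sum]
  refine sum_le_sum fun z hz => ?_
  have hterm : ∀ y, 0 ≤ (f z - f y) ^ 2 * rwMH π N z y * π z := fun y =>
    mul_nonneg (mul_nonneg (sq_nonneg _)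
      (nonneg_of_mem_rowStochastic (rwMH_mem_rowStochastic hπ hNirr))) (hπ z).le
  rcases eq_or_ne z xstar with rfl | hne
  · rw [hfix, sub_self, sq, zero_mul, mul_zero]
    exact mul_nonneg (Nat.cast_nonneg _) (sum_nonneg fun y _ => hterm y)
  obtain ⟨hN, hle⟩ := hσ z hz hne
  have hM : (0 : ℝ) < Mmax N := by
    exact_mod_cast (card_pos.2 ⟨_, hN⟩).trans_le (card_le_Mmax N z)
  have hQ : 1 ≤ Mmax N * rwMH π N z (σ z) :=
    (inv_le_iff_one_le_mul₀' hM).1 (inv_Mmax_le_rwMH_apply hπ hNsym hN hle)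
  calc π z * (f z - f (σ z)) ^ 2
      ≤ Mmax N * ((f z - f (σ z)) ^ 2 * rwMH π N z (σ z) * π z) := by
        nlinarith [mul_nonneg (hπ z).le (sq_nonneg (f z - f (σ z)))]
    _ ≤ Mmax N * ∑ y ∈ X0, (f z - f y) ^ 2 * rwMH π N z y * π z :=
        mul_le_mul_of_nonneg_left (single_le_sum (fun y _ => hterm y) (hS hz)) hM.le

theorem sum_sum_sq_sub_mul_mul_le_rwMH (hπ : ∀ x, 0 < π x) (hNirr : ∀ x, x ∉ N x)
    (hNsym : ∀ x y, y ∈ N x → x ∈ N y) (hxstar : xstar ∈ X0) (hX0 : ∑ x ∈ X0, π x ≤ 1)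
    {s : ℝ} (hs0 : 0 < s) (hs1 : s < 1) (hM : 0 < Mmax N)
    (hR : (Mmax N : ℝ) ≤ s ^ 2 * RvalRes π N X0 xstar) (f : X → ℝ) :
    ∑ x ∈ X0, ∑ y ∈ X0, (f x - f y) ^ 2 * π x * π y
      ≤ 2 * Mmax N / (1 - s) ^ 2 * ∑ x ∈ X0, ∑ y ∈ X0, (f x - f y) ^ 2 * rwMH π N x y * π x := by
  have hM1 : (1 : ℝ) ≤ Mmax N := by exact_mod_cast hM
  have hR1 : 1 < RvalRes π N X0 xstar := by nlinarith
  obtain ⟨σ, hfix, hS, hσ⟩ := exists_ascent_map hπ (by linarith) hxstar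
  have hgrow : ∀ x ∈ X0, x ≠ xstar → π x < π (σ x) := fun x hx hne =>
    (lt_mul_of_one_lt_left (hπ x) hR1).trans_le (hσ x hx hne).2
  have hK := iterate_card_eq_of_lt hfix hS hgrow
  have hfiber := sum_filter_iterate_le (sq_nonneg s) (fun x => (hπ x).le) hfix hS
    fun u hu => sum_filter_eq_le_of_ascent hπ hNsym hfix hσ hM hR hu
  have hpath := sum_mul_sq_sub_le_of_iterate hs0 hs1 (fun x => (hπ x).le) hfix hS hK hfiber f
  have hedge := sum_mul_sq_sub_ascent_le hπ hNirr hNsym hfix hS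
    (fun x hx hne => ⟨(hσ x hx hne).1, (hgrow x hx hne).le⟩) f
  calc ∑ x ∈ X0, ∑ y ∈ X0, (f x - f y) ^ 2 * π x * π y
      ≤ 2 * ∑ x ∈ X0, π x * (f x - f xstar) ^ 2 :=
        sum_sum_sq_sub_mul_mul_le (fun x _ => (hπ x).le) hX0 f (f xstar)
    _ ≤ 2 * (((1 - s) ^ 2)⁻¹ * (Mmax N *
          ∑ x ∈ X0, ∑ y ∈ X0, (f x - f y) ^ 2 * rwMH π N x y * π x)) := by
        gcongr
        exact hpath.trans (mul_le_mul_of_nonneg_left hedge (by positivity))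
    _ = _ := by ring

end RestrictedPoincare

lemma le_pow_mul_sub_add_of_le {a : ℕ → ℝ} {l b : ℝ} (hl : l ≤ 1)
    (h : ∀ t, a (t + 1) ≤ (1 - l) * a t + l * b) (t : ℕ) :
    a t ≤ (1 - l) ^ t * (a 0 - b) + b := by
  induction t with
  | zero => simp
  | succ t ih =>
    calc a (t + 1) ≤ (1 - l) * a t + l * b := h t
      _ ≤ (1 - l) * ((1 - l) ^ t * (a 0 - b) + b) + l * b := by gcongr
      _ = (1 - l) ^ (t + 1) * (a 0 - b) + b := by ring

lemma one_sub_inv_pow_floor_mul_log_le {C a : ℝ} (hC : 4 ≤ C) (ha : 0 < a) :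
    (1 - C⁻¹) ^ ⌊C * Real.log (1 / a)⌋₊ ≤ 4 / 3 * a := by
  set L := Real.log (1 / a) with hL
  set l := C⁻¹
  have hl0 : 0 < l := inv_pos.2 (by linarith)
  have hl : l ≤ 4⁻¹ := inv_anti₀ (by norm_num) hC
  have hT : L - l ≤ l * ⌊C * L⌋₊ := by
    have h := (Nat.sub_one_lt_floor (C * L)).le
    have hlC : l * C = 1 := inv_mul_cancel₀ (by linarith)
    calc L - l = l * (C * L - 1) := by linear_combination (-L) * hlC
      _ ≤ l * ⌊C * L⌋₊ := mul_le_mul_of_nonneg_left h hl0.le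
  have hexpL : Real.exp (-L) = a := by
    rw [hL, one_div, Real.log_inv, neg_neg, Real.exp_log ha]
  calc (1 - l) ^ ⌊C * L⌋₊ ≤ Real.exp (-l) ^ ⌊C * L⌋₊ :=
        pow_le_pow_left₀ (by linarith) (Real.one_sub_le_exp_neg l) _
    _ = Real.exp (-(l * ⌊C * L⌋₊)) := by rw [← Real.exp_nat_mul]; ring_nf
    _ ≤ Real.exp l * Real.exp (-L) := by rw [← Real.exp_add]; gcongr; linarith
    _ ≤ 4 / 3 * a := by
        rw [hexpL]
        gcongr
        calc Real.exp l ≤ 1 / (1 - l) :=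
              Real.exp_bound_div_one_sub_of_interval hl0.le (by linarith)
          _ ≤ 4 / 3 := by rw [div_le_iff₀ (by linarith)]; linarith

lemma four_le_cFun_mul {ρ M : ℝ} (hρ : 1 < ρ) (hM : 1 ≤ M) : 4 ≤ cFun ρ * M := by
  have hs0 : 0 < ρ ^ (-(2 : ℝ)⁻¹) := Real.rpow_pos_of_pos (by linarith) _
  have hs1 : ρ ^ (-(2 : ℝ)⁻¹) < 1 := Real.rpow_lt_one_of_one_lt_of_neg hρ (by norm_num)
  have hcube : (1 - ρ ^ (-(2 : ℝ)⁻¹)) ^ 3 ≤ 1 := pow_le_one₀ (by linarith) (by linarith)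
  have h4 : 4 ≤ cFun ρ := by
    rw [cFun, le_div_iff₀ (by have := sub_pos.2 hs1; positivity)]; linarith
  nlinarith

section LazyMetropolisDecay

variable {X : Type*} [Fintype X] [DecidableEq X] {π : X → ℝ} {N : X → Finset X}
  {X0 : Finset X} {xstar : X}

theorem sum_mul_sq_le_dirichletForm_lazyM_rwMH (hπ : ∀ x, 0 < π x) (hπsum : ∑ x, π x = 1)
    (hNirr : ∀ x, x ∉ N x) (hNsym : ∀ x y, y ∈ N x → x ∈ N y) (hxstar : xstar ∈ X0)
    {s : ℝ} (hs0 : 0 < s) (hs1 : s < 1) (hM : 0 < Mmax N)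
    (hR : (Mmax N : ℝ) ≤ s ^ 2 * RvalRes π N X0 xstar) {f : X → ℝ} {B : ℝ}
    (hf0 : ∑ x, π x * f x = 0) (hfB : ∀ x, |f x| ≤ B) :
    ∑ x, π x * f x ^ 2 ≤ 4 * Mmax N / (1 - s) ^ 3 * dirichletForm π (lazyM (rwMH π N)) f
      + 4 * B ^ 2 * (1 - ∑ x ∈ X0, π x) := by
  have hQ := rwMH_mem_rowStochastic hπ hNirr
  have hπ0 : ∀ x, 0 ≤ π x := fun x => (hπ x).le
  have hX0 : ∑ x ∈ X0, π x ≤ 1 := hπsum ▸ sum_le_univ_sum_of_nonneg hπ0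
  have hvar := sum_sum_sq_sub_mul_mul univ π f
  rw [hπsum, hf0] at hvar
  have htail := sum_sum_sq_sub_mul_mul_le_add hπ0 hπsum X0 hfB
  have hpoinc := sum_sum_sq_sub_mul_mul_le_rwMH hπ hNirr hNsym hxstar hX0 hs0 hs1 hM hR f
  have hlazy := sum_sum_sq_sub_mul_le_dirichletForm_lazyM hQ hπ0 X0 f
  have hE := dirichletForm_nonneg (lazyM_mem_rowStochastic hQ) hπ0 f
  have hcube : 4 * Mmax N / (1 - s) ^ 2 ≤ 4 * Mmax N / (1 - s) ^ 3 :=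
    div_le_div_of_nonneg_left (by positivity) (by have := sub_pos.2 hs1; positivity)
      (pow_le_pow_of_le_one (by linarith) (by linarith) (by norm_num))
  set K : ℝ := 2 * Mmax N / (1 - s) ^ 2
  have hK : 0 ≤ K := by positivity
  calc ∑ x, π x * f x ^ 2 = 2⁻¹ * ∑ x, ∑ y, (f x - f y) ^ 2 * π x * π y := by
        rw [hvar]; ring
    _ ≤ 2⁻¹ * (K * (4 * dirichletForm π (lazyM (rwMH π N)) f)
          + 8 * B ^ 2 * (1 - ∑ x ∈ X0, π x)) := by
        gcongr
        linarith [mul_le_mul_of_nonneg_left hlazy hK]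
    _ = 4 * Mmax N / (1 - s) ^ 2 * dirichletForm π (lazyM (rwMH π N)) f
          + 4 * B ^ 2 * (1 - ∑ x ∈ X0, π x) := by ring
    _ ≤ _ := by gcongr

theorem sum_mul_sq_le_cFun_mul_dirichletForm_lazyM_rwMH (hπ : ∀ x, 0 < π x)
    (hπsum : ∑ x, π x = 1) (hNirr : ∀ x, x ∉ N x) (hNsym : ∀ x y, y ∈ N x → x ∈ N y)
    (hxstar : xstar ∈ X0) {ρ : ℝ} (hρ : 1 < ρ) (hM : 0 < Mmax N)
    (hR : ρ * Mmax N ≤ RvalRes π N X0 xstar) {f : X → ℝ} {B : ℝ}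
    (hf0 : ∑ x, π x * f x = 0) (hfB : ∀ x, |f x| ≤ B) :
    ∑ x, π x * f x ^ 2 ≤ cFun ρ * Mmax N * dirichletForm π (lazyM (rwMH π N)) f
      + 4 * B ^ 2 * (1 - ∑ x ∈ X0, π x) := by
  set s := ρ ^ (-(2 : ℝ)⁻¹)
  have hs0 : 0 < s := Real.rpow_pos_of_pos (by linarith) _
  have hs1 : s < 1 := Real.rpow_lt_one_of_one_lt_of_neg hρ (by norm_num)
  have hs2 : s ^ 2 = ρ⁻¹ := by
    rw [← Real.rpow_natCast, ← Real.rpow_mul (by linarith)]; norm_num [Real.rpow_neg_one]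
  have hRs : (Mmax N : ℝ) ≤ s ^ 2 * RvalRes π N X0 xstar := by
    rw [hs2, ← div_eq_inv_mul, le_div_iff₀ (by linarith), mul_comm]; exact hR
  have hC : cFun ρ * Mmax N = 4 * Mmax N / (1 - s) ^ 3 := by simp only [cFun, s]; ring
  exact hC ▸ sum_mul_sq_le_dirichletForm_lazyM_rwMH hπ hπsum hNirr hNsym hxstar hs0 hs1 hM hRs
    hf0 hfB

theorem sum_mul_likelihoodRatio_lazyM_rwMH_sub_one_sq_le (hπ : ∀ x, 0 < π x)
    (hπsum : ∑ x, π x = 1) (hNirr : ∀ x, x ∉ N x) (hNsym : ∀ x y, y ∈ N x → x ∈ N y)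
    (hxstar : xstar ∈ X0) {ρ : ℝ} (hρ : 1 < ρ) (hM : 0 < Mmax N)
    (hR : ρ * Mmax N ≤ RvalRes π N X0 xstar) (x : X) (t : ℕ) :
    ∑ y, π y * (likelihoodRatio (lazyM (rwMH π N)) π x t y - 1) ^ 2
      ≤ (1 - (cFun ρ * Mmax N)⁻¹) ^ t * (π x)⁻¹ + 4 * (π x)⁻¹ ^ 2 * (1 - ∑ x ∈ X0, π x) := by
  set P := lazyM (rwMH π N)
  set C : ℝ := cFun ρ * Mmax N
  set b := 4 * (π x)⁻¹ ^ 2 * (1 - ∑ x ∈ X0, π x)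
  have hQ := rwMH_mem_rowStochastic hπ hNirr
  have hP : P ∈ rowStochastic ℝ X := lazyM_mem_rowStochastic hQ
  have hrev : IsReversible π P := isReversible_lazyM (isReversible_rwMH hπ hNsym)
  have hπ0 : ∀ x, 0 ≤ π x := fun x => (hπ x).le
  have hπ1 : ∀ x, π x ≤ 1 := fun x => hπsum ▸ single_le_sum (fun y _ => hπ0 y) (mem_univ x)
  have hb : 0 ≤ b := by
    have := sub_nonneg.2 (hπsum ▸ sum_le_univ_sum_of_nonneg hπ0 : ∑ x ∈ X0, π x ≤ 1)
    positivity
  have hC : 4 ≤ C := four_le_cFun_mul hρ (by exact_mod_cast hM)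
  set f : ℕ → X → ℝ := fun t => likelihoodRatio P π x t - 1
  have hstep : ∀ t, ∑ y, π y * f (t + 1) y ^ 2 ≤ (1 - C⁻¹) * ∑ y, π y * f t y ^ 2 + C⁻¹ * b := by
    intro t
    have hmean : ∑ y, π y * f t y = 0 := by
      simp [f, mul_sub, sum_sub_distrib, sum_mul_likelihoodRatio hπ hP, hπsum]
    have hf_succ : f (t + 1) = P *ᵥ f t := by
      simp only [f, likelihoodRatio_succ hπ hrev, mulVec_sub, one_vecMul_of_mem_rowStochastic hP]
    rw [hf_succ]
    exact (isReversible_rwMH hπ hNsym).sum_mul_lazyM_mulVec_sq_le_of_le hQ hπ0 (by linarith)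
      (sum_mul_sq_le_cFun_mul_dirichletForm_lazyM_rwMH hπ hπsum hNirr hNsym hxstar hρ hM hR
        hmean fun y => abs_likelihoodRatio_sub_one_le hπ hπ1 hrev hP x t y)
  have h0 : ∑ y, π y * f 0 y ^ 2 = (π x)⁻¹ - 1 :=
    sum_mul_likelihoodRatio_zero_sub_one_sq hπ hπsum x
  have hl : C⁻¹ ≤ 1 := inv_le_one_of_one_le₀ (by linarith)
  refine (le_pow_mul_sub_add_of_le (a := fun t => ∑ y, π y * f t y ^ 2) hl hstep t).trans ?_
  rw [h0]
  gcongr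
  linarith

end LazyMetropolisDecay

theorem stmt6_general {X : Type*} [Fintype X] [DecidableEq X]
    (π : X → ℝ) (hπpos : ∀ x, 0 < π x) (hπsum : ∑ x, π x = 1)
    (N : X → Finset X)
    (hNirr : ∀ x, x ∉ N x)
    (hNsym : ∀ x y, y ∈ N x → x ∈ N y)
    (X0 : Finset X) (x0 : X)
    (x0star : X) (hx0star : x0star ∈ X0)
    (η ε : ℝ) (hη0 : 0 < η) (hη1 : η < 1) (hε0 : 0 < ε) (hε1 : ε < 1 / 2)
    (ρ : ℝ) (hρdef : ρ = RvalRes π N X0 x0star / (Mmax N : ℝ)) (hρ : 1 < ρ)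
    (hwarm : η ≤ π x0)
    (hmass : 1 - ε ^ 2 * η ^ 2 / 5 ≤ ∑ x ∈ X0, π x) :
    (mixTimeFrom (lazyM (rwMH π N)) π ε x0 : ℝ) ≤
      cFun ρ * (Mmax N : ℝ) * Real.log (1 / (2 * ε ^ 2 * η ^ 2)) := by
  have hM : 0 < Mmax N := Nat.pos_of_ne_zero fun h => by
    rw [h, Nat.cast_zero, div_zero] at hρdef; linarith
  have hR : ρ * Mmax N ≤ RvalRes π N X0 x0star := by
    rw [hρdef, div_mul_cancel₀ _ (by exact_mod_cast hM.ne')]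
  set T := ⌊cFun ρ * Mmax N * Real.log (1 / (2 * ε ^ 2 * η ^ 2))⌋₊
  have hεη : 2 * ε ^ 2 * η ^ 2 ≤ 1 :=
    calc 2 * ε ^ 2 * η ^ 2 ≤ 2 * (1 / 2) ^ 2 * 1 ^ 2 := by gcongr
      _ ≤ 1 := by norm_num
  have hC := four_le_cFun_mul hρ (Nat.one_le_cast.2 hM)
  have hchi := sum_mul_likelihoodRatio_lazyM_rwMH_sub_one_sq_le hπpos hπsum hNirr hNsym
    hx0star hρ hM hR x0 T
  have htime := one_sub_inv_pow_floor_mul_log_le hC (by positivity : 0 < 2 * ε ^ 2 * η ^ 2)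
  have hX0 : ∑ x ∈ X0, π x ≤ 1 := hπsum ▸ sum_le_univ_sum_of_nonneg fun x => (hπpos x).le
  have hP := lazyM_mem_rowStochastic (rwMH_mem_rowStochastic hπpos hNirr)
  have htv : tvDist (fun y => (lazyM (rwMH π N) ^ T) x0 y) π ≤ ε := by
    refine tvDist_le_of_sum_mul_sq_le hπpos hπsum (sum_row_of_mem_rowStochastic (pow_mem hP T) x0)
      hε0.le (hchi.trans ?_)
    calc (1 - (cFun ρ * Mmax N)⁻¹) ^ T * (π x0)⁻¹ + 4 * (π x0)⁻¹ ^ 2 * (1 - ∑ x ∈ X0, π x)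
        ≤ 4 / 3 * (2 * ε ^ 2 * η ^ 2) * η⁻¹ + 4 * η⁻¹ ^ 2 * (ε ^ 2 * η ^ 2 / 5) := by
          gcongr
          all_goals first | exact (inv_pos.2 (hπpos x0)).le | linarith
      _ = 8 / 3 * ε ^ 2 * η + 4 / 5 * ε ^ 2 := by field_simp; ring
      _ ≤ (2 * ε) ^ 2 := by nlinarith [sq_nonneg ε]
  calc (mixTimeFrom (lazyM (rwMH π N)) π ε x0 : ℝ) ≤ T := by exact_mod_cast Nat.sInf_le htv
    _ ≤ _ := Nat.floor_le (mul_nonneg (by linarith)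
        (Real.log_nonneg (one_le_one_div (by positivity) hεη)))

theorem stmt6 {X : Type*} [Fintype X] [DecidableEq X] [Nonempty X]
    (π : X → ℝ) (hπpos : ∀ x, 0 < π x) (hπsum : ∑ x, π x = 1)
    (N : X → Finset X)
    (hNirr : ∀ x, x ∉ N x)
    (hNsym : ∀ x y, y ∈ N x → x ∈ N y)
    (hNconn : ∀ x y : X, Relation.ReflTransGen (fun a b => b ∈ N a) x y)
    (X0 : Finset X) (x0 : X) (hx0 : x0 ∈ X0)
    (x0star : X) (hx0star : x0star ∈ X0) (hx0max : ∀ x ∈ X0, π x ≤ π x0star)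
    (η ε : ℝ) (hη0 : 0 < η) (hη1 : η < 1) (hε0 : 0 < ε) (hε1 : ε < 1 / 2)
    (ρ : ℝ) (hρdef : ρ = RvalRes π N X0 x0star / (Mmax N : ℝ)) (hρ : 1 < ρ)
    (hwarm : η ≤ π x0)
    (hmass : 1 - ε ^ 2 * η ^ 2 / 5 ≤ ∑ x ∈ X0, π x) :
    (mixTimeFrom (lazyM (rwMH π N)) π ε x0 : ℝ) ≤
      cFun ρ * (Mmax N : ℝ) * Real.log (1 / (2 * ε ^ 2 * η ^ 2)) :=
  stmt6_general π hπpos hπsum N hNirr hNsym X0 x0 x0star hx0star η ε hη0 hη1 hε0 hε1 ρ hρdef hρ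
    hwarm hmass
end
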